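/- arXiv:2406.01849 — 5 statements merged into one kernel-verified Lean document; each statement's English description precedes it below -/
import Mathlib

section
/- Let X₁ and X₂ be real-valued random variables. Suppose that for all real a < b, ℙ(X₁ ∈ [a,b]) > 0 if and only if ℙ(X₂ ∈ [a,b]) > 0, and that whenever these probabilities are positive, E[X₁ | X₁ ∈ [a,b]] = E[X₂ | X₂ ∈ [a,b]]. Then X₁ and X₂ have the same probability distribution. -/
/-!
If an interval splits into adjacent pieces `(a, b]` and `(b, c]` of positive mass, the conditional
mean of `X` on `(a, c]` is the mixture of its conditional means on the pieces, weighted by their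
masses, and these two means differ (one is `≤ b`, the other `> b`). Equal conditional means for
both laws therefore force equal mixture weights: the ratio of the two laws is the same on adjacent,
hence on nested, intervals, and exhausting `ℝ` shows that it is `1`. Closed intervals, on which the
hypotheses are stated, pass to half-open ones by monotone limits.
-/

open MeasureTheory Set

/-- Conditional expectation of `Z` given the event `U`: `E[Z·1_U] / ℙ(U)`. -/
noncomputable def cexp {Ω : Type*} [MeasurableSpace Ω] (P : Measure Ω) (U : Set Ω)
    (Z : Ω → ℝ) : ℝ :=
  (∫ ω in U, Z ω ∂P) / (P U).toReal

open Filter Topology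

lemma tendsto_measureReal_iUnion_atTop {α : Type*} [MeasurableSpace α] {μ : Measure α}
    [IsFiniteMeasure μ] {s : ℕ → Set α} (hmono : Monotone s) :
    Tendsto (fun n => μ.real (s n)) atTop (𝓝 (μ.real (⋃ n, s n))) :=
  (ENNReal.tendsto_toReal (measure_ne_top μ _)).comp (tendsto_measure_iUnion_atTop hmono)

/-- The cross-multiplied form of `E[X | X ∈ s]` being the same under `μ₁` and `μ₂`: it stays
meaningful when `s` is null. -/
def SameMeanOn (μ₁ μ₂ : Measure ℝ) (s : Set ℝ) : Prop :=
  (∫ x in s, x ∂μ₁) * μ₂.real s = (∫ x in s, x ∂μ₂) * μ₁.real s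

section Means

variable {μ μ₁ μ₂ : Measure ℝ} {s : Set ℝ} {b : ℝ}

lemma sameMeanOn_of_measure_eq_zero (h₁ : μ₁ s = 0) (h₂ : μ₂ s = 0) : SameMeanOn μ₁ μ₂ s := by
  simp [SameMeanOn, Measure.restrict_eq_zero.2 h₁, Measure.restrict_eq_zero.2 h₂]

variable [IsFiniteMeasure μ] [IsFiniteMeasure μ₁] [IsFiniteMeasure μ₂]

lemma SameMeanOn.iUnion_of_monotone {s : ℕ → Set ℝ} (hs : ∀ n, MeasurableSet (s n))
    (hmono : Monotone s) (hi₁ : IntegrableOn (fun x => x) (⋃ n, s n) μ₁)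
    (hi₂ : IntegrableOn (fun x => x) (⋃ n, s n) μ₂) (h : ∀ n, SameMeanOn μ₁ μ₂ (s n)) :
    SameMeanOn μ₁ μ₂ (⋃ n, s n) :=
  tendsto_nhds_unique
    (((tendsto_setIntegral_of_monotone hs hmono hi₁).mul
      (tendsto_measureReal_iUnion_atTop hmono)).congr h)
    ((tendsto_setIntegral_of_monotone hs hmono hi₂).mul (tendsto_measureReal_iUnion_atTop hmono))

lemma setIntegral_id_le_mul_measureReal (hs : MeasurableSet s)
    (hi : IntegrableOn (fun x => x) s μ) (hsb : s ⊆ Iic b) :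
    ∫ x in s, x ∂μ ≤ b * μ.real s := by
  simpa [setIntegral_const, mul_comm] using
    setIntegral_mono_on hi integrableOn_const hs fun x hx => (hsb hx : x ≤ b)

lemma mul_measureReal_lt_setIntegral_id (hs : MeasurableSet s)
    (hi : IntegrableOn (fun x => x) s μ) (hsb : s ⊆ Ioi b) (hμ : μ s ≠ 0) :
    b * μ.real s < ∫ x in s, x ∂μ := by
  have hpos : 0 < ∫ x in s, (x - b) ∂μ := by
    rw [setIntegral_pos_iff_support_of_nonneg_ae
      ((ae_restrict_iff' hs).2 (ae_of_all _ fun x hx => sub_nonneg.2 (hsb hx).le))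
      (hi.sub integrableOn_const)]
    have : (Function.support fun x => x - b) ∩ s = s :=
      inter_eq_right.2 fun x hx => sub_ne_zero.2 (hsb hx : b < x).ne'
    rwa [this, pos_iff_ne_zero]
  rw [integral_sub hi integrableOn_const, setIntegral_const, smul_eq_mul] at hpos
  linarith

end Means

/-- The mean `(u + u') / (p + p')` of a mixture is a combination of the means `u / p` and
`u' / p'` with weights `p`, `p'`; when these means differ, it determines the ratio of the
weights. -/
lemma mul_eq_mul_of_mixture_mean_eq {p q p' q' u v u' v' : ℝ} (h : u * q = v * p)
    (h' : u' * q' = v' * p') (hmix : (u + u') * (q + q') = (v + v') * (p + p'))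
    (hne : u * p' ≠ u' * p) : p * q' = q * p' := by
  have key : (u * p' - u' * p) * (p * q' - q * p') = 0 := by
    linear_combination (p * p') * hmix - (p * p' + p' ^ 2) * h - (p * p' + p ^ 2) * h'
  exact sub_eq_zero.1 ((mul_eq_zero.1 key).resolve_left (sub_ne_zero.2 hne))

section Intervals

variable {μ μ₁ μ₂ : Measure ℝ} [IsFiniteMeasure μ] [IsFiniteMeasure μ₁] [IsFiniteMeasure μ₂]
  {a b c : ℝ}

lemma integrableOn_id_Ioc : IntegrableOn (fun x => x) (Ioc a b) μ :=
  continuous_id.integrableOn_Ioc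

lemma measureReal_Ioc_add_Ioc (hab : a ≤ b) (hbc : b ≤ c) :
    μ.real (Ioc a b) + μ.real (Ioc b c) = μ.real (Ioc a c) := by
  rw [← Ioc_union_Ioc_eq_Ioc hab hbc,
    measureReal_union (Ioc_disjoint_Ioc_of_le le_rfl) measurableSet_Ioc]

lemma setIntegral_id_Ioc_add_Ioc (hab : a ≤ b) (hbc : b ≤ c) :
    ∫ x in Ioc a b, x ∂μ + ∫ x in Ioc b c, x ∂μ = ∫ x in Ioc a c, x ∂μ := by
  rw [← Ioc_union_Ioc_eq_Ioc hab hbc, setIntegral_union (Ioc_disjoint_Ioc_of_le le_rfl)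
    measurableSet_Ioc integrableOn_id_Ioc integrableOn_id_Ioc]

lemma measureReal_Ioc_mul_eq_of_sameMeanOn (hab : a ≤ b) (hbc : b ≤ c)
    (hnull : ∀ a b, μ₁ (Ioc a b) = 0 ↔ μ₂ (Ioc a b) = 0)
    (hmean : ∀ a b, SameMeanOn μ₁ μ₂ (Ioc a b)) :
    μ₁.real (Ioc a b) * μ₂.real (Ioc b c) = μ₂.real (Ioc a b) * μ₁.real (Ioc b c) := by
  by_cases h₁ : μ₁ (Ioc a b) = 0
  · simp [Measure.real, h₁, (hnull a b).1 h₁]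
  by_cases h₂ : μ₁ (Ioc b c) = 0
  · simp [Measure.real, h₂, (hnull b c).1 h₂]
  refine mul_eq_mul_of_mixture_mean_eq (hmean a b) (hmean b c) ?_ (ne_of_lt ?_)
  · have := hmean a c
    rwa [SameMeanOn, ← setIntegral_id_Ioc_add_Ioc hab hbc, ← setIntegral_id_Ioc_add_Ioc hab hbc,
      ← measureReal_Ioc_add_Ioc hab hbc, ← measureReal_Ioc_add_Ioc hab hbc] at this
  · have hp : 0 < μ₁.real (Ioc a b) :=
      measureReal_nonneg.lt_of_ne' ((measureReal_ne_zero_iff).2 h₁)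
    have hp' : 0 < μ₁.real (Ioc b c) :=
      measureReal_nonneg.lt_of_ne' ((measureReal_ne_zero_iff).2 h₂)
    have hle := setIntegral_id_le_mul_measureReal (μ := μ₁) (s := Ioc a b) measurableSet_Ioc
      integrableOn_id_Ioc fun x hx => (hx.2 : x ≤ b)
    have hlt := mul_measureReal_lt_setIntegral_id measurableSet_Ioc
      integrableOn_id_Ioc (fun x hx => (hx.1 : b < x)) h₂
    nlinarith

lemma measureReal_Ioc_mul_eq_of_subset {A B : ℝ} (hA : A ≤ a) (hab : a ≤ b) (hB : b ≤ B)
    (hnull : ∀ a b, μ₁ (Ioc a b) = 0 ↔ μ₂ (Ioc a b) = 0)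
    (hmean : ∀ a b, SameMeanOn μ₁ μ₂ (Ioc a b)) :
    μ₁.real (Ioc a b) * μ₂.real (Ioc A B) = μ₂.real (Ioc a b) * μ₁.real (Ioc A B) := by
  have hleft := measureReal_Ioc_mul_eq_of_sameMeanOn hA hab hnull hmean
  have hright := measureReal_Ioc_mul_eq_of_sameMeanOn hab hB hnull hmean
  rw [← measureReal_Ioc_add_Ioc (hA.trans hab) hB, ← measureReal_Ioc_add_Ioc (hA.trans hab) hB,
    ← measureReal_Ioc_add_Ioc hA hab, ← measureReal_Ioc_add_Ioc hA hab]
  linear_combination hright - hleft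

end Intervals

lemma exists_antitone_iUnion_Icc_eq_Ioc {b c : ℝ} (hbc : b < c) :
    ∃ u : ℕ → ℝ, Antitone u ∧ (∀ n, b < u n ∧ u n < c) ∧ ⋃ n, Icc (u n) c = Ioc b c := by
  obtain ⟨u, hanti, hu, hlim⟩ := exists_seq_strictAnti_tendsto' hbc
  refine ⟨u, hanti.antitone, hu, Subset.antisymm ?_ fun x hx => ?_⟩
  · exact iUnion_subset fun n x hx => ⟨(hu n).1.trans_le hx.1, hx.2⟩
  · obtain ⟨n, hn⟩ := (hlim.eventually (gt_mem_nhds hx.1)).exists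
    exact mem_iUnion.2 ⟨n, hn.le, hx.2⟩

lemma iUnion_Ioc_sub_add_natCast (a b : ℝ) : ⋃ n : ℕ, Ioc (a - n) (b + n) = univ := by
  refine eq_univ_of_forall fun x => mem_iUnion.2 ?_
  obtain ⟨n, hn⟩ := exists_nat_gt (max (a - x) (x - b))
  exact ⟨n, by linarith [le_max_left (a - x) (x - b)], by linarith [le_max_right (a - x) (x - b)]⟩

section FromIcc

variable {μ₁ μ₂ : Measure ℝ}

lemma measure_Ioc_eq_zero_iff_of_Icc
    (hnull : ∀ a b, a < b → (μ₁ (Icc a b) = 0 ↔ μ₂ (Icc a b) = 0)) (b c : ℝ) :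
    μ₁ (Ioc b c) = 0 ↔ μ₂ (Ioc b c) = 0 := by
  rcases le_or_gt c b with hcb | hbc
  · simp [Ioc_eq_empty_of_le hcb]
  obtain ⟨u, -, hu, hunion⟩ := exists_antitone_iUnion_Icc_eq_Ioc hbc
  rw [← hunion, measure_iUnion_null_iff, measure_iUnion_null_iff]
  exact forall_congr' fun n => hnull _ _ (hu n).2

lemma sameMeanOn_Ioc_of_Icc [IsFiniteMeasure μ₁] [IsFiniteMeasure μ₂]
    (hmean : ∀ a b, a < b → SameMeanOn μ₁ μ₂ (Icc a b)) (b c : ℝ) :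
    SameMeanOn μ₁ μ₂ (Ioc b c) := by
  rcases le_or_gt c b with hcb | hbc
  · exact sameMeanOn_of_measure_eq_zero (by simp [Ioc_eq_empty_of_le hcb])
      (by simp [Ioc_eq_empty_of_le hcb])
  obtain ⟨u, hanti, hu, hunion⟩ := exists_antitone_iUnion_Icc_eq_Ioc hbc
  rw [← hunion]
  exact SameMeanOn.iUnion_of_monotone (fun n => measurableSet_Icc)
    (fun m n hmn => Icc_subset_Icc_left (hanti hmn)) (hunion ▸ integrableOn_id_Ioc)
    (hunion ▸ integrableOn_id_Ioc) fun n => hmean _ _ (hu n).2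

end FromIcc

theorem eq_of_sameMeanOn_Ioc {μ₁ μ₂ : Measure ℝ} [IsProbabilityMeasure μ₁]
    [IsProbabilityMeasure μ₂] (hnull : ∀ a b, μ₁ (Ioc a b) = 0 ↔ μ₂ (Ioc a b) = 0)
    (hmean : ∀ a b, SameMeanOn μ₁ μ₂ (Ioc a b)) : μ₁ = μ₂ := by
  refine Measure.ext_of_Ioc μ₁ μ₂ fun a b hab => ?_
  have hmono : Monotone fun n : ℕ => Ioc (a - n) (b + n) := fun m n hmn =>
    Ioc_subset_Ioc (by gcongr) (by gcongr)
  have hlim : ∀ μ : Measure ℝ, [IsProbabilityMeasure μ] →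
      Tendsto (fun n : ℕ => μ.real (Ioc (a - n) (b + n))) atTop (𝓝 1) := fun μ _ => by
    simpa [iUnion_Ioc_sub_add_natCast] using tendsto_measureReal_iUnion_atTop (μ := μ) hmono
  have hcross (n : ℕ) : μ₁.real (Ioc a b) * μ₂.real (Ioc (a - n) (b + n))
      = μ₂.real (Ioc a b) * μ₁.real (Ioc (a - n) (b + n)) :=
    measureReal_Ioc_mul_eq_of_subset (by linarith [n.cast_nonneg (α := ℝ)]) hab.le
      (by linarith [n.cast_nonneg (α := ℝ)]) hnull hmean
  have := tendsto_nhds_unique ((tendsto_const_nhds.mul (hlim μ₂)).congr hcross)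
    (tendsto_const_nhds.mul (hlim μ₁))
  rw [mul_one, mul_one] at this
  exact (ENNReal.toReal_eq_toReal_iff' (measure_ne_top _ _) (measure_ne_top _ _)).1 this

lemma cexp_eq_setIntegral_map {Ω : Type*} [MeasurableSpace Ω] {P : Measure Ω} {X : Ω → ℝ}
    (hX : Measurable X) {s : Set ℝ} (hs : MeasurableSet s) :
    cexp P {ω | X ω ∈ s} X = (∫ x in s, x ∂P.map X) / (P.map X).real s := by
  rw [cexp, setIntegral_map (f := fun x : ℝ => x) hs aestronglyMeasurable_id hX.aemeasurable,
    Measure.real, Measure.map_apply hX hs]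
  rfl

theorem stmt_0 {Ω : Type*} [MeasurableSpace Ω] (P : Measure Ω) [IsProbabilityMeasure P]
    (X₁ X₂ : Ω → ℝ) (hX₁ : Measurable X₁) (hX₂ : Measurable X₂)
    (hpos : ∀ a b : ℝ, a < b →
      (0 < P {ω | X₁ ω ∈ Icc a b} ↔ 0 < P {ω | X₂ ω ∈ Icc a b}))
    (heq : ∀ a b : ℝ, a < b → 0 < P {ω | X₁ ω ∈ Icc a b} → 0 < P {ω | X₂ ω ∈ Icc a b} →
      cexp P {ω | X₁ ω ∈ Icc a b} X₁ = cexp P {ω | X₂ ω ∈ Icc a b} X₂) :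
    Measure.map X₁ P = Measure.map X₂ P := by
  have := Measure.isProbabilityMeasure_map (μ := P) hX₁.aemeasurable
  have := Measure.isProbabilityMeasure_map (μ := P) hX₂.aemeasurable
  have hprob (a b : ℝ) : P {ω | X₁ ω ∈ Icc a b} = P.map X₁ (Icc a b) ∧
      P {ω | X₂ ω ∈ Icc a b} = P.map X₂ (Icc a b) :=
    ⟨(Measure.map_apply hX₁ measurableSet_Icc).symm, (Measure.map_apply hX₂ measurableSet_Icc).symm⟩
  have hnull : ∀ a b, a < b → (P.map X₁ (Icc a b) = 0 ↔ P.map X₂ (Icc a b) = 0) := by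
    intro a b hab
    simpa only [not_lt, nonpos_iff_eq_zero, hprob] using (hpos a b hab).not
  have hmean : ∀ a b, a < b → SameMeanOn (P.map X₁) (P.map X₂) (Icc a b) := by
    intro a b hab
    by_cases h₁ : P.map X₁ (Icc a b) = 0
    · exact sameMeanOn_of_measure_eq_zero h₁ ((hnull a b hab).1 h₁)
    have h₂ : P.map X₂ (Icc a b) ≠ 0 := fun h₂ => h₁ ((hnull a b hab).2 h₂)
    have h := heq a b hab (by rw [(hprob a b).1]; exact pos_iff_ne_zero.2 h₁)
      (by rw [(hprob a b).2]; exact pos_iff_ne_zero.2 h₂)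
    rw [cexp_eq_setIntegral_map hX₁ measurableSet_Icc,
      cexp_eq_setIntegral_map hX₂ measurableSet_Icc] at h
    exact (div_eq_div_iff ((measureReal_ne_zero_iff).2 h₁) ((measureReal_ne_zero_iff).2 h₂)).1 h
  exact eq_of_sameMeanOn_Ioc (measure_Ioc_eq_zero_iff_of_Icc hnull)
    (sameMeanOn_Ioc_of_Icc hmean)
end

section
/- Let X₁ and X₂ be integrable real-valued random variables (E|X₁| < ∞ and E|X₂| < ∞). Suppose that for every t ∈ ℝ, ℙ(X₁ ≥ t) > 0 if and only if ℙ(X₂ ≥ t) > 0, and that whenever these probabilities are positive, E[X₁ | X₁ ≥ t] = E[X₂ | X₂ ≥ t]. Then X₁ and X₂ have the same probability distribution. -/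
open MeasureTheory Set

/-! With `F(t) = E[(X - t)⁺]` one has `F(t) = (E[X | X ≥ t] - t) ℙ(X ≥ t)`, so the hypothesis says
`ℙ(X₁ ≥ t) F₂(t) = ℙ(X₂ ≥ t) F₁(t)`; letting `t` decrease to a point turns this into the same
identity with `ℙ(X > t)`, which is `-F'` from the right. Hence `F₁ / F₂` has vanishing right
derivative where `F₂ > 0`, and since `F(t) ∼ -t` as `t → -∞` the ratio is `1`. So `F₁ = F₂`, and
their right derivatives give `ℙ(X₁ > t) = ℙ(X₂ > t)` for all `t`. -/

open Filter Topology ProbabilityTheory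

/-- The stop-loss transform `E[(X - t)⁺] = ∫_t^∞ ℙ(X > u) du` of the law `μ` of `X`. -/
noncomputable def integratedTail (μ : Measure ℝ) (t : ℝ) : ℝ := ∫ x, max (x - t) 0 ∂μ

section IntegratedTail

variable {μ ν : Measure ℝ}

lemma measureReal_Ioi_eq_one_sub_cdf [IsProbabilityMeasure μ] (t : ℝ) :
    μ.real (Ioi t) = 1 - cdf μ t := by
  rw [cdf_eq_real, ← compl_Iic, measureReal_compl measurableSet_Iic, probReal_univ]

lemma tendsto_measureReal_Ioi_nhdsGT [IsProbabilityMeasure μ] (t : ℝ) :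
    Tendsto (fun u => μ.real (Ioi u)) (𝓝[>] t) (𝓝 (μ.real (Ioi t))) := by
  simp_rw [measureReal_Ioi_eq_one_sub_cdf]
  exact tendsto_const_nhds.sub (((cdf μ).right_continuous t).mono Ioi_subset_Ici_self)

lemma tendsto_measureReal_Ici_nhdsGT [IsProbabilityMeasure μ] (t : ℝ) :
    Tendsto (fun u => μ.real (Ici u)) (𝓝[>] t) (𝓝 (μ.real (Ioi t))) :=
  tendsto_of_tendsto_of_tendsto_of_le_of_le' (tendsto_measureReal_Ioi_nhdsGT t)
    tendsto_const_nhds (Eventually.of_forall fun _ => measureReal_mono Ioi_subset_Ici_self)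
    (eventually_mem_nhdsWithin.mono fun _ hu => measureReal_mono (Ici_subset_Ioi.2 hu))

lemma integrable_max_sub [IsFiniteMeasure μ] (hμ : Integrable id μ) (t : ℝ) :
    Integrable (fun x => max (x - t) 0) μ :=
  (hμ.sub (integrable_const t)).pos_part

lemma integratedTail_nonneg (t : ℝ) : 0 ≤ integratedTail μ t :=
  integral_nonneg fun _ => le_max_right _ _

lemma integratedTail_eq_setIntegral [IsFiniteMeasure μ] (hμ : Integrable id μ) (t : ℝ) :
    integratedTail μ t = ∫ x in Ici t, x ∂μ - t * μ.real (Ici t) := by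
  have h : (fun x => max (x - t) 0) = (Ici t).indicator (fun x => x - t) := by
    ext x
    by_cases hx : t ≤ x
    · simp [hx]
    · simp [hx, (not_le.1 hx).le]
  have hμ' : Integrable (fun x => x) μ := hμ
  rw [integratedTail, h, integral_indicator measurableSet_Ici,
    integral_sub hμ'.integrableOn (integrable_const t).integrableOn, setIntegral_const, smul_eq_mul,
    mul_comm]

lemma integratedTail_sub_eq_integral [IsFiniteMeasure μ] (hμ : Integrable id μ) (t u : ℝ) :
    integratedTail μ t - integratedTail μ u =
      ∫ x, (max (x - t) 0 - max (x - u) 0) ∂μ :=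
  (integral_sub (integrable_max_sub hμ t) (integrable_max_sub hμ u)).symm

lemma integratedTail_sub_le [IsFiniteMeasure μ] (hμ : Integrable id μ) {t u : ℝ} (htu : t ≤ u) :
    integratedTail μ t - integratedTail μ u ≤ (u - t) * μ.real (Ioi t) := by
  rw [integratedTail_sub_eq_integral hμ, mul_comm, ← smul_eq_mul,
    ← integral_indicator_const _ measurableSet_Ioi]
  refine integral_mono ((integrable_max_sub hμ t).sub (integrable_max_sub hμ u))
    ((integrable_const _).indicator measurableSet_Ioi) fun x => ?_
  simp only [indicator_apply, mem_Ioi]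
  split_ifs <;> simp only [max_def] <;> split_ifs <;> linarith

lemma le_integratedTail_sub [IsFiniteMeasure μ] (hμ : Integrable id μ) {t u : ℝ} (htu : t ≤ u) :
    (u - t) * μ.real (Ioi u) ≤ integratedTail μ t - integratedTail μ u := by
  rw [integratedTail_sub_eq_integral hμ, mul_comm, ← smul_eq_mul,
    ← integral_indicator_const _ measurableSet_Ioi]
  refine integral_mono ((integrable_const _).indicator measurableSet_Ioi)
    ((integrable_max_sub hμ t).sub (integrable_max_sub hμ u)) fun x => ?_
  simp only [indicator_apply, mem_Ioi]
  split_ifs <;> simp only [max_def] <;> split_ifs <;> linarith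

lemma integratedTail_antitone [IsFiniteMeasure μ] (hμ : Integrable id μ) :
    Antitone (integratedTail μ) := fun _ _ htu =>
  sub_nonneg.1 <| (mul_nonneg (sub_nonneg.2 htu) measureReal_nonneg).trans
    (le_integratedTail_sub hμ htu)

lemma lipschitzWith_integratedTail [IsProbabilityMeasure μ] (hμ : Integrable id μ) :
    LipschitzWith 1 (integratedTail μ) := by
  refine LipschitzWith.of_le_add fun t u => ?_
  rcases le_total t u with htu | hut
  · have := integratedTail_sub_le hμ htu
    have := mul_le_of_le_one_right (sub_nonneg.2 htu) (measureReal_le_one (μ := μ) (s := Ioi t))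
    rw [Real.dist_eq, abs_sub_comm, abs_of_nonneg (sub_nonneg.2 htu)]
    linarith
  · linarith [integratedTail_antitone hμ hut, dist_nonneg (x := t) (y := u)]

lemma hasDerivWithinAt_integratedTail [IsProbabilityMeasure μ] (hμ : Integrable id μ) (t : ℝ) :
    HasDerivWithinAt (integratedTail μ) (-μ.real (Ioi t)) (Ici t) t := by
  rw [← hasDerivWithinAt_Ioi_iff_Ici, hasDerivWithinAt_iff_tendsto_slope,
    sdiff_singleton_eq_self self_notMem_Ioi]
  refine tendsto_of_tendsto_of_tendsto_of_le_of_le' tendsto_const_nhds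
    (tendsto_measureReal_Ioi_nhdsGT t).neg ?_ ?_ <;>
  filter_upwards [self_mem_nhdsWithin] with u (htu : t < u)
  · rw [slope_def_field, le_div_iff₀ (sub_pos.2 htu)]
    linarith [integratedTail_sub_le hμ htu.le]
  · rw [slope_def_field, div_le_iff₀ (sub_pos.2 htu)]
    linarith [le_integratedTail_sub hμ htu.le]

lemma tendsto_integratedTail_add_atBot [IsProbabilityMeasure μ] (hμ : Integrable id μ) :
    Tendsto (fun b => integratedTail μ b + b) atBot (𝓝 (∫ x, x ∂μ)) := by
  have h : ∀ b, integratedTail μ b + b = ∫ x, max x b ∂μ := fun b => by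
    have hmax : ∀ x : ℝ, max x b = max (x - b) 0 + b := fun x => by
      rw [← max_add_add_right, sub_add_cancel, zero_add]
    simp_rw [hmax]
    rw [integral_add (integrable_max_sub hμ b) (integrable_const b), integral_const, probReal_univ,
      one_smul, integratedTail]
  simp_rw [h]
  refine tendsto_integral_filter_of_dominated_convergence (fun x => |x|)
    (Eventually.of_forall fun b => (hμ.sup (integrable_const b)).aestronglyMeasurable)
    ((eventually_le_atBot 0).mono fun b hb => ae_of_all _ fun x => ?_) hμ.abs
    (ae_of_all _ fun x => tendsto_const_nhds.congr' ?_)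
  · exact abs_le.2 ⟨(neg_abs_le x).trans (le_max_left _ _),
      max_le (le_abs_self x) (hb.trans (abs_nonneg x))⟩
  · filter_upwards [eventually_le_atBot x] with b hb
    exact (max_eq_left hb).symm

lemma tendsto_integratedTail_div_neg_atBot [IsProbabilityMeasure μ] (hμ : Integrable id μ) :
    Tendsto (fun b => integratedTail μ b / -b) atBot (𝓝 1) := by
  have h := ((tendsto_integratedTail_add_atBot hμ).div_atTop tendsto_neg_atBot_atTop).add_const 1
  rw [zero_add] at h
  refine h.congr' ((eventually_lt_atBot 0).mono fun b hb => ?_)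
  rw [add_div, div_neg_self hb.ne]
  ring

lemma tendsto_integratedTail_div_atBot [IsProbabilityMeasure μ] [IsProbabilityMeasure ν]
    (hμ : Integrable id μ) (hν : Integrable id ν) :
    Tendsto (fun b => integratedTail μ b / integratedTail ν b) atBot (𝓝 1) := by
  have h := (tendsto_integratedTail_div_neg_atBot hμ).div
    (tendsto_integratedTail_div_neg_atBot hν) one_ne_zero
  rw [div_one] at h
  refine h.congr' ((eventually_lt_atBot 0).mono fun b hb => ?_)
  exact div_div_div_cancel_right₀ (neg_pos.2 hb).ne' _ _

lemma measureReal_Ici_mul_integratedTail_comm [IsFiniteMeasure μ] [IsFiniteMeasure ν]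
    (hμ : Integrable id μ) (hν : Integrable id ν)
    (hpos : ∀ t, 0 < μ (Ici t) ↔ 0 < ν (Ici t))
    (heq : ∀ t, 0 < μ (Ici t) → 0 < ν (Ici t) →
      (∫ x in Ici t, x ∂μ) / μ.real (Ici t) = (∫ x in Ici t, x ∂ν) / ν.real (Ici t)) (t : ℝ) :
    μ.real (Ici t) * integratedTail ν t = ν.real (Ici t) * integratedTail μ t := by
  rcases eq_zero_or_pos (μ (Ici t)) with hμt | hμt
  · have hνt : ν (Ici t) = 0 := by
      by_contra h
      exact (hpos t).2 (pos_iff_ne_zero.2 h) |>.ne' hμt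
    simp [measureReal_def, hμt, hνt]
  · have hνt := (hpos t).1 hμt
    have h := heq t hμt hνt
    have hμr : μ.real (Ici t) ≠ 0 := (ENNReal.toReal_pos hμt.ne' (measure_ne_top μ _)).ne'
    have hνr : ν.real (Ici t) ≠ 0 := (ENNReal.toReal_pos hνt.ne' (measure_ne_top ν _)).ne'
    rw [div_eq_div_iff hμr hνr] at h
    rw [integratedTail_eq_setIntegral hμ, integratedTail_eq_setIntegral hν]
    linear_combination -h

lemma measureReal_Ioi_mul_integratedTail_comm [IsProbabilityMeasure μ] [IsProbabilityMeasure ν]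
    (hμ : Integrable id μ) (hν : Integrable id ν)
    (h : ∀ t, μ.real (Ici t) * integratedTail ν t = ν.real (Ici t) * integratedTail μ t)
    (t : ℝ) : μ.real (Ioi t) * integratedTail ν t = ν.real (Ioi t) * integratedTail μ t := by
  have hF : ∀ ρ : Measure ℝ, [IsProbabilityMeasure ρ] → Integrable id ρ →
      Tendsto (integratedTail ρ) (𝓝[>] t) (𝓝 (integratedTail ρ t)) := fun ρ _ hρ =>
    (lipschitzWith_integratedTail hρ).continuous.continuousWithinAt
  exact tendsto_nhds_unique
    (((tendsto_measureReal_Ici_nhdsGT t).mul (hF ν hν)).congr h)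
    ((tendsto_measureReal_Ici_nhdsGT t).mul (hF μ hμ))

lemma integratedTail_div_eq_of_le [IsProbabilityMeasure μ] [IsProbabilityMeasure ν]
    (hμ : Integrable id μ) (hν : Integrable id ν)
    (hS : ∀ s, μ.real (Ioi s) * integratedTail ν s = ν.real (Ioi s) * integratedTail μ s)
    {b t : ℝ} (hbt : b ≤ t) (ht : 0 < integratedTail ν t) :
    integratedTail μ b / integratedTail ν b = integratedTail μ t / integratedTail ν t := by
  have hpos : ∀ s ≤ t, integratedTail ν s ≠ 0 := fun s hs =>
    (ht.trans_le (integratedTail_antitone hν hs)).ne'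
  refine (constant_of_has_deriv_right_zero
    ((lipschitzWith_integratedTail hμ).continuous.continuousOn.div
      (lipschitzWith_integratedTail hν).continuous.continuousOn fun s hs => hpos s hs.2)
    (fun s hs => ?_) t ⟨hbt, le_rfl⟩).symm
  exact ((hasDerivWithinAt_integratedTail hμ s).div (hasDerivWithinAt_integratedTail hν s)
    (hpos s hs.2.le)).congr_deriv (by rw [neg_mul, hS s]; ring)

lemma integratedTail_eq_of_pos [IsProbabilityMeasure μ] [IsProbabilityMeasure ν]
    (hμ : Integrable id μ) (hν : Integrable id ν)
    (hS : ∀ s, μ.real (Ioi s) * integratedTail ν s = ν.real (Ioi s) * integratedTail μ s)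
    {t : ℝ} (ht : 0 < integratedTail ν t) : integratedTail μ t = integratedTail ν t := by
  have hconst : Tendsto (fun b => integratedTail μ b / integratedTail ν b) atBot
      (𝓝 (integratedTail μ t / integratedTail ν t)) :=
    tendsto_const_nhds.congr' <| (eventually_le_atBot t).mono fun b hb =>
      (integratedTail_div_eq_of_le hμ hν hS hb ht).symm
  exact (div_eq_one_iff_eq ht.ne').1
    (tendsto_nhds_unique hconst (tendsto_integratedTail_div_atBot hμ hν))

lemma integratedTail_eq_of_forall_mul_eq [IsProbabilityMeasure μ] [IsProbabilityMeasure ν]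
    (hμ : Integrable id μ) (hν : Integrable id ν)
    (hS : ∀ s, μ.real (Ioi s) * integratedTail ν s = ν.real (Ioi s) * integratedTail μ s) :
    integratedTail μ = integratedTail ν := by
  ext t
  rcases (integratedTail_nonneg (μ := ν) t).lt_or_eq with hν_pos | hν_zero
  · exact integratedTail_eq_of_pos hμ hν hS hν_pos
  rcases (integratedTail_nonneg (μ := μ) t).lt_or_eq with hμ_pos | hμ_zero
  · exact (integratedTail_eq_of_pos hν hμ (fun s => (hS s).symm) hμ_pos).symm
  · exact hμ_zero.symm.trans hν_zero

lemma eq_of_integratedTail_eq [IsProbabilityMeasure μ] [IsProbabilityMeasure ν]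
    (hμ : Integrable id μ) (hν : Integrable id ν) (h : integratedTail μ = integratedTail ν) :
    μ = ν := by
  refine Measure.eq_of_cdf μ ν (StieltjesFunction.ext fun t => ?_)
  have hderiv := (uniqueDiffWithinAt_Ici t).eq_deriv _ (hasDerivWithinAt_integratedTail hμ t)
    (h ▸ hasDerivWithinAt_integratedTail hν t)
  linarith [measureReal_Ioi_eq_one_sub_cdf (μ := μ) t, measureReal_Ioi_eq_one_sub_cdf (μ := ν) t]

end IntegratedTail

theorem eq_of_forall_setIntegral_Ici_div_eq {μ ν : Measure ℝ} [IsProbabilityMeasure μ]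
    [IsProbabilityMeasure ν] (hμ : Integrable id μ) (hν : Integrable id ν)
    (hpos : ∀ t, 0 < μ (Ici t) ↔ 0 < ν (Ici t))
    (heq : ∀ t, 0 < μ (Ici t) → 0 < ν (Ici t) →
      (∫ x in Ici t, x ∂μ) / μ.real (Ici t) = (∫ x in Ici t, x ∂ν) / ν.real (Ici t)) :
    μ = ν :=
  eq_of_integratedTail_eq hμ hν <| integratedTail_eq_of_forall_mul_eq hμ hν <|
    measureReal_Ioi_mul_integratedTail_comm hμ hν <|
      measureReal_Ici_mul_integratedTail_comm hμ hν hpos heq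

lemma cexp_setOf_le_eq {Ω : Type*} [MeasurableSpace Ω] (P : Measure Ω) {X : Ω → ℝ}
    (hX : Measurable X) (t : ℝ) :
    cexp P {ω | t ≤ X ω} X = (∫ x in Ici t, x ∂P.map X) / (P.map X).real (Ici t) := by
  rw [setIntegral_map (f := fun x => x) measurableSet_Ici aestronglyMeasurable_id hX.aemeasurable,
    map_measureReal_apply hX measurableSet_Ici]
  rfl

theorem stmt_1 {Ω : Type*} [MeasurableSpace Ω] (P : Measure Ω) [IsProbabilityMeasure P]
    (X₁ X₂ : Ω → ℝ) (hX₁ : Measurable X₁) (hX₂ : Measurable X₂)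
    (hX₁i : Integrable X₁ P) (hX₂i : Integrable X₂ P)
    (hpos : ∀ t : ℝ, (0 < P {ω | t ≤ X₁ ω} ↔ 0 < P {ω | t ≤ X₂ ω}))
    (heq : ∀ t : ℝ, 0 < P {ω | t ≤ X₁ ω} → 0 < P {ω | t ≤ X₂ ω} →
      cexp P {ω | t ≤ X₁ ω} X₁ = cexp P {ω | t ≤ X₂ ω} X₂) :
    Measure.map X₁ P = Measure.map X₂ P := by
  have := Measure.isProbabilityMeasure_map (μ := P) hX₁.aemeasurable
  have := Measure.isProbabilityMeasure_map (μ := P) hX₂.aemeasurable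
  have hlaw : ∀ {X : Ω → ℝ}, Measurable X → ∀ t, P.map X (Ici t) = P {ω | t ≤ X ω} :=
    fun hX t => Measure.map_apply hX measurableSet_Ici
  refine eq_of_forall_setIntegral_Ici_div_eq
    ((integrable_map_measure aestronglyMeasurable_id hX₁.aemeasurable).2 hX₁i)
    ((integrable_map_measure aestronglyMeasurable_id hX₂.aemeasurable).2 hX₂i)
    (fun t => ?_) (fun t h₁ h₂ => ?_)
  · rw [hlaw hX₁, hlaw hX₂]
    exact hpos t
  · rw [hlaw hX₁] at h₁
    rw [hlaw hX₂] at h₂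
    rw [← cexp_setOf_le_eq P hX₁, ← cexp_setOf_le_eq P hX₂]
    exact heq t h₁ h₂
end

section
/- Let P₁ and P₂ be Borel probability measures on ℝ with finite first moments (∫_ℝ |x| dPᵢ(x) < ∞ for i = 1,2). Suppose that every half-line [t,∞) with P₂([t,∞)) > 0 also satisfies P₁([t,∞)) > 0, and that for every such t, (∫_{[t,∞)} x dP₂(x))/P₂([t,∞)) = (∫_{[t,∞)} x dP₁(x))/P₁([t,∞)). Then P₁([t,∞)) > 0 if and only if P₂([t,∞)) > 0 for every t ∈ ℝ, and P₁ = P₂ as Borel measures. -/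
/-!
Write `H_P t = ∫ (x - t)⁺ dP` for the stop-loss transform. The conditional mean of `P` over
`[t, ∞)` is `t + H_P t / P [t, ∞)`, so the hypothesis says `H₂ t · P₁ [t, ∞) = H₁ t · P₂ [t, ∞)`.
The right derivative of `H_P` is `-P (t, ∞)`; letting `[t, ∞)` shrink to `(y, ∞)` turns the
hypothesis into `H₂ H₁' = H₁ H₂'` wherever `H₂ > 0`. Hence `H₁ / H₂` is constant on every
half-line `(-∞, c]` with `H₂ c > 0`, and the constant is `1` because `H_P t ~ -t` as `t → -∞`.
Monotonicity and continuity carry `H₁ = H₂` past the top of the support of `P₂`, and `H_P`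
determines `P` through its right derivative.
-/

open MeasureTheory Set Filter Topology ProbabilityTheory

lemma eq_of_eqOn_pos {f g : ℝ → ℝ} (hf : Continuous f) (hg : Continuous g)
    (hf_anti : Antitone f) (hg_anti : Antitone g) (hf_nonneg : ∀ x, 0 ≤ f x)
    (hg_nonneg : ∀ x, 0 ≤ g x) (hne : {x | 0 < g x}.Nonempty)
    (hfg : EqOn f g {x | 0 < g x}) : f = g := by
  funext y
  rcases (hg_nonneg y).lt_or_eq with hy | hy
  · exact hfg hy
  have hy_ub : y ∈ upperBounds {x | 0 < g x} := fun x hx =>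
    not_lt.mp fun hyx => hx.ne' (le_antisymm (hy ▸ hg_anti hyx.le) (hg_nonneg x))
  have hbdd : BddAbove {x | 0 < g x} := ⟨y, hy_ub⟩
  set z := sSup {x | 0 < g x}
  have hgz : g z = 0 := by
    refine le_antisymm (le_of_tendsto ((hg.tendsto z).mono_left (nhdsWithin_le_nhds (s := Ioi z)))
      ?_) (hg_nonneg z)
    exact eventually_nhdsWithin_of_forall fun x hx =>
      not_lt.mp fun hgx => notMem_of_csSup_lt hx hbdd hgx
  have hfz : f z = g z := hfg.closure hf hg (csSup_mem_closure hne hbdd)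
  have hfy : f y ≤ f z := hf_anti (csSup_le hne hy_ub)
  linarith [hf_nonneg y]

lemma setLIntegral_Ioi_measure_Ioi {P : Measure ℝ} [SFinite P] (t : ℝ) :
    ∫⁻ s in Ioi t, P (Ioi s) = ∫⁻ x, ENNReal.ofReal (x - t) ∂P := by
  have hmeas : Measurable (Function.uncurry fun s x : ℝ => (Iio x).indicator (1 : ℝ → ENNReal) s) :=
    (measurable_const.indicator (measurableSet_lt measurable_fst measurable_snd) :
      Measurable ({p : ℝ × ℝ | p.1 < p.2}.indicator fun _ => (1 : ENNReal)))
  calc ∫⁻ s in Ioi t, P (Ioi s)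
      = ∫⁻ s in Ioi t, ∫⁻ x, (Iio x).indicator 1 s ∂P := by
        refine lintegral_congr fun s => ?_
        rw [← lintegral_indicator_one measurableSet_Ioi]
        rfl
    _ = ∫⁻ x, (∫⁻ s in Ioi t, (Iio x).indicator 1 s) ∂P :=
        lintegral_lintegral_swap hmeas.aemeasurable
    _ = ∫⁻ x, ENNReal.ofReal (x - t) ∂P := by
        refine lintegral_congr fun x => ?_
        rw [lintegral_indicator_one measurableSet_Iio, Measure.restrict_apply measurableSet_Iio,
          Iio_inter_Ioi, Real.volume_Ioo]

noncomputable def survival (P : Measure ℝ) (s : ℝ) : ℝ := P.real (Ioi s)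

noncomputable def stopLoss (P : Measure ℝ) (t : ℝ) : ℝ := ∫ x, max (x - t) 0 ∂P

section OneMeasure

variable {P : Measure ℝ}

lemma stopLoss_nonneg (t : ℝ) : 0 ≤ stopLoss P t :=
  integral_nonneg fun _ => le_max_right _ _

lemma measurable_measure_Ioi : Measurable fun s => P (Ioi s) :=
  Antitone.measurable fun _ _ h => measure_mono (Ioi_subset_Ioi h)

lemma antitone_survival [IsFiniteMeasure P] : Antitone (survival P) :=
  fun _ _ h => measureReal_mono (Ioi_subset_Ioi h)

lemma stopLoss_eq_integral_survival [IsFiniteMeasure P] (t : ℝ) :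
    stopLoss P t = ∫ s in Ioi t, survival P s := by
  rw [stopLoss, integral_eq_lintegral_of_nonneg_ae (f := fun x => max (x - t) 0)
    (ae_of_all _ fun _ => le_max_right _ _) (by fun_prop)]
  change _ = ∫ s in Ioi t, (P (Ioi s)).toReal
  rw [integral_toReal measurable_measure_Ioi.aemeasurable (ae_of_all _ fun _ => measure_lt_top _ _),
    setLIntegral_Ioi_measure_Ioi]
  simp

lemma survival_eq_one_sub_cdf [IsProbabilityMeasure P] (s : ℝ) :
    survival P s = 1 - cdf P s := by
  rw [survival, cdf_eq_real, ← compl_Iic, probReal_compl_eq_one_sub measurableSet_Iic]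

lemma continuousWithinAt_survival [IsProbabilityMeasure P] (s : ℝ) :
    ContinuousWithinAt (survival P) (Ici s) s := by
  rw [show survival P = fun s => 1 - cdf P s from funext survival_eq_one_sub_cdf]
  exact continuousWithinAt_const.sub ((cdf P).right_continuous s)

lemma tendsto_measureReal_Ici_nhdsGT_s3 [IsProbabilityMeasure P] (t : ℝ) :
    Tendsto (fun s => P.real (Ici s)) (𝓝[>] t) (𝓝 (survival P t)) :=
  tendsto_of_tendsto_of_tendsto_of_le_of_le'
    ((continuousWithinAt_survival t).mono Ioi_subset_Ici_self) tendsto_const_nhds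
    (Eventually.of_forall fun s => measureReal_mono Ioi_subset_Ici_self)
    (eventually_nhdsWithin_of_forall fun s hs => measureReal_mono (Ici_subset_Ioi.mpr hs))

section Integrable

variable [IsFiniteMeasure P] (hP : Integrable (fun x => x) P)
include hP

lemma integrableOn_survival (t : ℝ) : IntegrableOn (survival P) (Ioi t) := by
  refine integrable_toReal_of_lintegral_ne_top measurable_measure_Ioi.aemeasurable ?_
  rw [setLIntegral_Ioi_measure_Ioi]
  exact (hP.sub (integrable_const t)).lintegral_lt_top.ne

lemma setIntegral_Ici_eq_mul_add_stopLoss (t : ℝ) :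
    ∫ x in Ici t, x ∂P = t * P.real (Ici t) + stopLoss P t := by
  have hind : (fun x => max (x - t) 0) = (Ici t).indicator fun x => x - t := by
    ext x
    by_cases hx : t ≤ x <;> simp [hx, le_of_lt, not_le.mp]
  rw [stopLoss, hind, integral_indicator measurableSet_Ici,
    integral_sub hP.integrableOn (integrableOn_const (measure_ne_top _ _)), setIntegral_const,
    smul_eq_mul, mul_comm]
  simp

lemma setIntegral_Ici_div_measureReal {t : ℝ} (ht : P.real (Ici t) ≠ 0) :
    (∫ x in Ici t, x ∂P) / P.real (Ici t) = t + stopLoss P t / P.real (Ici t) := by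
  rw [setIntegral_Ici_eq_mul_add_stopLoss hP, add_div, mul_div_cancel_right₀ _ ht]

lemma stopLoss_pos_iff {t : ℝ} : 0 < stopLoss P t ↔ 0 < P (Ioi t) := by
  have hint : Integrable (fun x => max (x - t) 0) P := (hP.sub (integrable_const t)).pos_part
  rw [stopLoss, integral_pos_iff_support_of_nonneg (f := fun x => max (x - t) 0)
    (fun _ => le_max_right _ _) hint]
  congr! 2
  ext x
  simp

lemma stopLoss_sub_stopLoss (a b : ℝ) :
    stopLoss P a - stopLoss P b = ∫ s in a..b, survival P s := by
  rw [stopLoss_eq_integral_survival, stopLoss_eq_integral_survival,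
    intervalIntegral.integral_Ioi_sub_Ioi' (integrableOn_survival hP a)
      (integrableOn_survival hP b)]

lemma antitone_stopLoss : Antitone (stopLoss P) := fun a b hab => by
  have hsub := stopLoss_sub_stopLoss hP a b
  have hint : 0 ≤ ∫ s in a..b, survival P s :=
    intervalIntegral.integral_nonneg hab fun _ _ => measureReal_nonneg
  linarith

lemma stopLoss_eq_sub_integral :
    stopLoss P = fun t => stopLoss P 0 - ∫ s in 0..t, survival P s := by
  ext t
  rw [← stopLoss_sub_stopLoss hP, sub_sub_cancel]

lemma continuous_stopLoss : Continuous (stopLoss P) := by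
  rw [stopLoss_eq_sub_integral hP]
  exact continuous_const.sub
    (intervalIntegral.continuous_primitive (fun _ _ => antitone_survival.intervalIntegrable) 0)

end Integrable

section Probability

variable [IsProbabilityMeasure P] (hP : Integrable (fun x => x) P)
include hP

lemma hasDerivWithinAt_stopLoss (t : ℝ) :
    HasDerivWithinAt (stopLoss P) (-survival P t) (Ici t) t := by
  have hmeas : Measurable (survival P) := antitone_survival.measurable
  rw [stopLoss_eq_sub_integral hP]
  exact (intervalIntegral.integral_hasDerivWithinAt_right antitone_survival.intervalIntegrable
    hmeas.stronglyMeasurable.stronglyMeasurableAtFilter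
    ((continuousWithinAt_survival t).mono Ioi_subset_Ici_self)).const_sub _

lemma integral_id_sub_le_stopLoss (t : ℝ) : ∫ x, x ∂P - t ≤ stopLoss P t := by
  calc ∫ x, x ∂P - t = ∫ x, (x - t) ∂P := by
        rw [integral_sub hP (integrable_const t), integral_const, probReal_univ, one_smul]
    _ ≤ stopLoss P t := integral_mono (hP.sub (integrable_const t))
        (hP.sub (integrable_const t)).pos_part fun _ => le_max_left _ _

lemma stopLoss_le_integral_abs_sub {t : ℝ} (ht : t ≤ 0) : stopLoss P t ≤ ∫ x, |x| ∂P - t := by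
  calc stopLoss P t ≤ ∫ x, (|x| - t) ∂P :=
        integral_mono (hP.sub (integrable_const t)).pos_part (hP.abs.sub (integrable_const t))
          fun x => max_le (by linarith [le_abs_self x]) (by linarith [abs_nonneg x])
    _ = ∫ x, |x| ∂P - t := by
        rw [integral_sub hP.abs (integrable_const t), integral_const, probReal_univ, one_smul]

lemma tendsto_stopLoss_div_neg_atBot : Tendsto (fun t => stopLoss P t / -t) atBot (𝓝 1) := by
  have hlim : ∀ c : ℝ, Tendsto (fun t : ℝ => 1 + c / -t) atBot (𝓝 1) := fun c => by
    simpa using tendsto_const_nhds.add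
      (tendsto_const_nhds.div_atTop (tendsto_neg_atBot_atTop (G := ℝ)))
  refine tendsto_of_tendsto_of_tendsto_of_le_of_le' (hlim (∫ x, x ∂P)) (hlim (∫ x, |x| ∂P)) ?_ ?_
  · filter_upwards [eventually_lt_atBot 0] with t ht
    rw [one_add_div (by linarith), div_le_div_iff_of_pos_right (by linarith)]
    linarith [integral_id_sub_le_stopLoss hP t]
  · filter_upwards [eventually_lt_atBot 0] with t ht
    rw [one_add_div (by linarith), div_le_div_iff_of_pos_right (by linarith)]
    linarith [stopLoss_le_integral_abs_sub hP ht.le]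

end Probability

end OneMeasure

section TwoMeasures

variable {P₁ P₂ : Measure ℝ} [IsProbabilityMeasure P₁] [IsProbabilityMeasure P₂]
  (hP₁ : Integrable (fun x => x) P₁) (hP₂ : Integrable (fun x => x) P₂)
  (hcross : ∀ t, 0 < stopLoss P₂ t →
    stopLoss P₂ t * P₁.real (Ici t) = stopLoss P₁ t * P₂.real (Ici t))
include hP₁ hP₂ hcross

lemma survival_mul_stopLoss_eq {y : ℝ} (hy : 0 < stopLoss P₂ y) :
    survival P₁ y * stopLoss P₂ y = survival P₂ y * stopLoss P₁ y := by
  have hlim₁ : Tendsto (fun t => stopLoss P₂ t * P₁.real (Ici t)) (𝓝[>] y)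
      (𝓝 (stopLoss P₂ y * survival P₁ y)) :=
    (continuous_stopLoss hP₂).continuousWithinAt.tendsto.mul (tendsto_measureReal_Ici_nhdsGT_s3 y)
  have hlim₂ : Tendsto (fun t => stopLoss P₁ t * P₂.real (Ici t)) (𝓝[>] y)
      (𝓝 (stopLoss P₁ y * survival P₂ y)) :=
    (continuous_stopLoss hP₁).continuousWithinAt.tendsto.mul (tendsto_measureReal_Ici_nhdsGT_s3 y)
  have hev : ∀ᶠ t in 𝓝[>] y, 0 < stopLoss P₂ t :=
    nhdsWithin_le_nhds ((continuous_stopLoss hP₂).continuousAt.eventually (lt_mem_nhds hy))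
  have hlim := tendsto_nhds_unique_of_eventuallyEq hlim₁ hlim₂ (hev.mono fun t ht => hcross t ht)
  linarith

lemma stopLoss_div_stopLoss_eq {a c : ℝ} (hc : 0 < stopLoss P₂ c) (hac : a ≤ c) :
    stopLoss P₁ a / stopLoss P₂ a = stopLoss P₁ c / stopLoss P₂ c := by
  have hpos : ∀ x ≤ c, 0 < stopLoss P₂ x := fun x hx =>
    hc.trans_le (antitone_stopLoss hP₂ hx)
  have hcont : ContinuousOn (fun x => stopLoss P₁ x / stopLoss P₂ x) (Icc a c) :=
    (continuous_stopLoss hP₁).continuousOn.div (continuous_stopLoss hP₂).continuousOn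
      fun x hx => (hpos x hx.2).ne'
  have hderiv : ∀ x ∈ Ico a c,
      HasDerivWithinAt (fun x => stopLoss P₁ x / stopLoss P₂ x) 0 (Ici x) x := by
    intro x hx
    have hx₂ := hpos x hx.2.le
    have hzero : (-survival P₁ x * stopLoss P₂ x - stopLoss P₁ x * -survival P₂ x)
        / stopLoss P₂ x ^ 2 = 0 := by
      rw [div_eq_zero_iff]
      left
      linarith [survival_mul_stopLoss_eq hP₁ hP₂ hcross hx₂]
    exact hzero ▸ (hasDerivWithinAt_stopLoss hP₁ x).fun_div (hasDerivWithinAt_stopLoss hP₂ x)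
      hx₂.ne'
  exact (constant_of_has_deriv_right_zero hcont hderiv c ⟨hac, le_rfl⟩).symm

lemma stopLoss_eq_of_pos {c : ℝ} (hc : 0 < stopLoss P₂ c) : stopLoss P₁ c = stopLoss P₂ c := by
  have hone : Tendsto (fun t => stopLoss P₁ t / stopLoss P₂ t) atBot (𝓝 1) := by
    have hdiv := (tendsto_stopLoss_div_neg_atBot hP₁).div (tendsto_stopLoss_div_neg_atBot hP₂)
      one_ne_zero
    rw [div_one] at hdiv
    refine hdiv.congr' ?_
    filter_upwards [eventually_lt_atBot 0] with t ht
    exact div_div_div_cancel_right₀ (by linarith) _ _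
  have hconst : Tendsto (fun t => stopLoss P₁ t / stopLoss P₂ t) atBot
      (𝓝 (stopLoss P₁ c / stopLoss P₂ c)) :=
    tendsto_const_nhds.congr' <| (eventually_le_atBot c).mono fun a ha =>
      (stopLoss_div_stopLoss_eq hP₁ hP₂ hcross hc ha).symm
  exact (div_eq_one_iff_eq hc.ne').mp (tendsto_nhds_unique hconst hone)

lemma stopLoss_eq : stopLoss P₁ = stopLoss P₂ := by
  obtain ⟨t, ht⟩ : ∃ t, 1 ≤ stopLoss P₂ t :=
    ⟨∫ x, x ∂P₂ - 1, by linarith [integral_id_sub_le_stopLoss hP₂ (∫ x, x ∂P₂ - 1)]⟩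
  exact eq_of_eqOn_pos (continuous_stopLoss hP₁) (continuous_stopLoss hP₂)
    (antitone_stopLoss hP₁) (antitone_stopLoss hP₂) stopLoss_nonneg stopLoss_nonneg
    ⟨t, show 0 < stopLoss P₂ t by linarith⟩ fun c hc => stopLoss_eq_of_pos hP₁ hP₂ hcross hc

end TwoMeasures

lemma eq_of_stopLoss_eq {P₁ P₂ : Measure ℝ} [IsProbabilityMeasure P₁] [IsProbabilityMeasure P₂]
    (hP₁ : Integrable (fun x => x) P₁) (hP₂ : Integrable (fun x => x) P₂)
    (h : stopLoss P₁ = stopLoss P₂) : P₁ = P₂ := by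
  refine Measure.eq_of_cdf P₁ P₂ (StieltjesFunction.ext fun t => ?_)
  have hderiv := (uniqueDiffWithinAt_Ici t).eq_deriv _ (hasDerivWithinAt_stopLoss hP₁ t)
    (h ▸ hasDerivWithinAt_stopLoss hP₂ t)
  rw [neg_inj, survival_eq_one_sub_cdf, survival_eq_one_sub_cdf] at hderiv
  linarith

theorem stmt_3 (P₁ P₂ : Measure ℝ) [IsProbabilityMeasure P₁] [IsProbabilityMeasure P₂]
    (hint₁ : Integrable (fun x : ℝ => |x|) P₁) (hint₂ : Integrable (fun x : ℝ => |x|) P₂)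
    (hpos : ∀ t : ℝ, 0 < P₂ (Ici t) → 0 < P₁ (Ici t))
    (heq : ∀ t : ℝ, 0 < P₂ (Ici t) →
      (∫ x in Ici t, x ∂P₂) / (P₂ (Ici t)).toReal
        = (∫ x in Ici t, x ∂P₁) / (P₁ (Ici t)).toReal) :
    (∀ t : ℝ, (0 < P₁ (Ici t) ↔ 0 < P₂ (Ici t))) ∧ P₁ = P₂ := by
  have hP₁ : Integrable (fun x => x) P₁ := (integrable_norm_iff aestronglyMeasurable_id).mp hint₁
  have hP₂ : Integrable (fun x => x) P₂ := (integrable_norm_iff aestronglyMeasurable_id).mp hint₂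
  have hcross : ∀ t, 0 < stopLoss P₂ t →
      stopLoss P₂ t * P₁.real (Ici t) = stopLoss P₁ t * P₂.real (Ici t) := by
    intro t ht
    have h₂ : 0 < P₂ (Ici t) :=
      ((stopLoss_pos_iff hP₂).mp ht).trans_le (measure_mono Ioi_subset_Ici_self)
    have hG₁ : 0 < P₁.real (Ici t) := ENNReal.toReal_pos (hpos t h₂).ne' (measure_ne_top _ _)
    have hG₂ : 0 < P₂.real (Ici t) := ENNReal.toReal_pos h₂.ne' (measure_ne_top _ _)
    have hmean := heq t h₂
    rw [← measureReal_def, ← measureReal_def, setIntegral_Ici_div_measureReal hP₂ hG₂.ne',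
      setIntegral_Ici_div_measureReal hP₁ hG₁.ne', add_right_inj,
      div_eq_div_iff hG₂.ne' hG₁.ne'] at hmean
    exact hmean
  have hP : P₁ = P₂ := eq_of_stopLoss_eq hP₁ hP₂ (stopLoss_eq hP₁ hP₂ hcross)
  exact ⟨fun t => by rw [hP], hP⟩
end

section
/- Let X and Y be real-valued random variables. Then X and Y are stochastically independent if and only if for every pair of bounded closed intervals A = [a,b] and B = [c,d] (a < b, c < d) with ℙ(X ∈ A, Y ∈ B) > 0, setting U = {X ∈ A, Y ∈ B}, one has E[XY | U] = E[X | U] · E[Y | U]. -/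
/-!
Write `UncorrelatedOn P X Y U` for the hypothesis with denominators cleared,
`P(U) E[XY; U] = E[X; U] E[Y; U]`. Independence gives it on every product set; conversely it
passes from closed to half-open rectangles by monotone limits.

Fix the `Y`-window and regard the mass `m` and the moments `f = E[X; ·]`, `g = E[Y; ·]`,
`h = E[XY; ·]` of the rectangle as additive functions of the `X`-interval, with `m h = f g`.
For adjacent intervals `I < K < J`, this identity on `I`, `J`, `K`, `I ∪ K`, `K ∪ J`, `I ∪ K ∪ J`
yields `(m_I f_J - m_J f_I) (m_I g_J - m_J g_I) = 0`, and the first factor is positive because the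
mean of `X` on `J` exceeds its mean on `I`. Hence `g / m`, the conditional mean of `Y`, does not
depend on the `X`-interval. The same argument in the `Y`-interval, with `m`, `g` the masses over
two nested `X`-windows `I ⊆ I'` and `f`, `h` the corresponding moments of `Y`, shows that
`P(X ∈ I, Y ∈ J) / P(X ∈ I', Y ∈ J)` does not depend on `J`. Letting `I'` and the second `J`
exhaust `ℝ` gives `P(X ∈ I, Y ∈ J) = P(X ∈ I) P(Y ∈ J)`, which determines the joint law.
-/

open MeasureTheory Set

open Filter Topology

/-- `m a b` stands for the value of `m` on the interval `(a, b]`. -/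
def IntervalAdditive (m : ℝ → ℝ → ℝ) : Prop :=
  ∀ ⦃a b c : ℝ⦄, a ≤ b → b ≤ c → m a c = m a b + m b c

namespace IntervalAdditive

variable {m f g h : ℝ → ℝ → ℝ}

lemma mono (hm : IntervalAdditive m) (hm_nonneg : ∀ a b, a ≤ b → 0 ≤ m a b)
    {a' a b b' : ℝ} (h₁ : a' ≤ a) (h₂ : a ≤ b) (h₃ : b ≤ b') : m a b ≤ m a' b' := by
  rw [hm h₁ (h₂.trans h₃), hm h₂ h₃]
  linarith [hm_nonneg a' a h₁, hm_nonneg b b' h₃]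

lemma ratio_eq_of_ratio_eq_of_le (hm : IntervalAdditive m) (hg : IntervalAdditive g)
    (hm_nonneg : ∀ a b, a ≤ b → 0 ≤ m a b) (hg_zero : ∀ a b, a ≤ b → m a b = 0 → g a b = 0)
    (H : ∀ a b c d, a ≤ b → b ≤ c → c ≤ d → g a b * m c d = m a b * g c d)
    {a b c d : ℝ} (hab : a ≤ b) (hcd : c ≤ d) : g a b * m c d = m a b * g c d := by
  have nested : ∀ {a' a b b'}, a' ≤ a → a ≤ b → b ≤ b' → g a b * m a' b' = m a b * g a' b' := by
    intro a' a b b' h₁ h₂ h₃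
    rw [hm h₁ (h₂.trans h₃), hm h₂ h₃, hg h₁ (h₂.trans h₃), hg h₂ h₃]
    linear_combination H a b b b' h₂ le_rfl h₃ - H a' a a b h₁ le_rfl h₂
  have ha : min a c ≤ a := min_le_left a c
  have hb : b ≤ max b d := le_max_left b d
  have hc : min a c ≤ c := min_le_right a c
  have hd : d ≤ max b d := le_max_right b d
  rcases eq_or_ne (m (min a c) (max b d)) 0 with hK | hK
  · have hI : m a b = 0 :=
      le_antisymm (hK ▸ hm.mono hm_nonneg ha hab hb) (hm_nonneg a b hab)
    have hJ : m c d = 0 :=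
      le_antisymm (hK ▸ hm.mono hm_nonneg hc hcd hd) (hm_nonneg c d hcd)
    rw [hg_zero a b hab hI, hI, hJ, zero_mul, zero_mul]
  · refine mul_right_cancel₀ hK ?_
    linear_combination m c d * nested ha hab hb - m a b * nested hc hcd hd

lemma ratio_eq_of_mul_eq_mul (hm : IntervalAdditive m) (hf : IntervalAdditive f)
    (hg : IntervalAdditive g) (hh : IntervalAdditive h)
    (hm_nonneg : ∀ a b, a ≤ b → 0 ≤ m a b) (hg_zero : ∀ a b, a ≤ b → m a b = 0 → g a b = 0)
    (hf_le : ∀ a b, a ≤ b → f a b ≤ b * m a b)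
    (hf_gt : ∀ a b, a ≤ b → 0 < m a b → a * m a b < f a b)
    (hmul : ∀ a b, a ≤ b → m a b * h a b = f a b * g a b)
    {a b c d : ℝ} (hab : a ≤ b) (hcd : c ≤ d) : g a b * m c d = m a b * g c d := by
  refine hm.ratio_eq_of_ratio_eq_of_le hg hm_nonneg hg_zero (fun a b c d hab hbc hcd => ?_) hab hcd
  rcases (hm_nonneg a b hab).eq_or_lt with hI | hI
  · rw [← hI, hg_zero a b hab hI.symm, zero_mul, zero_mul]
  rcases (hm_nonneg c d hcd).eq_or_lt with hJ | hJ
  · rw [← hJ, hg_zero c d hcd hJ.symm, mul_zero, mul_zero]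
  have hcross : m a b * h c d + m c d * h a b = f a b * g c d + f c d * g a b := by
    have hac := hmul a c (hab.trans hbc)
    have hbd := hmul b d (hbc.trans hcd)
    have had := hmul a d (hab.trans (hbc.trans hcd))
    rw [hm hab hbc, hf hab hbc, hg hab hbc, hh hab hbc] at hac
    rw [hm hbc hcd, hf hbc hcd, hg hbc hcd, hh hbc hcd] at hbd
    rw [hm hab (hbc.trans hcd), hf hab (hbc.trans hcd), hg hab (hbc.trans hcd),
      hh hab (hbc.trans hcd), hm hbc hcd, hf hbc hcd, hg hbc hcd, hh hbc hcd] at had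
    linear_combination had - hac - hbd + hmul b c hbc
  have hprod : (m a b * f c d - m c d * f a b) * (m a b * g c d - m c d * g a b) = 0 := by
    linear_combination (-(m a b) ^ 2) * hmul c d hcd - m c d ^ 2 * hmul a b hab
      + m a b * m c d * hcross
  have hpos : 0 < m a b * f c d - m c d * f a b := by
    linarith [mul_lt_mul_of_pos_left (hf_gt c d hcd hJ) hI,
      mul_le_mul_of_nonneg_left (hf_le a b hab) hJ.le,
      mul_nonneg (mul_nonneg hI.le hJ.le) (sub_nonneg.2 hbc)]
  linear_combination -(mul_eq_zero.1 hprod).resolve_left hpos.ne'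

end IntervalAdditive

lemma iUnion_Icc_add_one_div (a b : ℝ) : ⋃ n : ℕ, Icc (a + 1 / (n + 1)) b = Ioc a b := by
  ext x
  simp only [mem_iUnion, mem_Icc, mem_Ioc]
  constructor
  · rintro ⟨n, hax, hxb⟩
    exact ⟨lt_of_lt_of_le (lt_add_of_pos_right a Nat.one_div_pos_of_nat) hax, hxb⟩
  · rintro ⟨hax, hxb⟩
    obtain ⟨n, hn⟩ := exists_nat_one_div_lt (sub_pos.2 hax)
    exact ⟨n, by linarith, hxb⟩

lemma monotone_Icc_add_one_div (a b : ℝ) : Monotone fun n : ℕ => Icc (a + 1 / (n + 1)) b :=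
  fun _ _ hnm => Icc_subset_Icc_left (add_le_add_right (Nat.one_div_le_one_div hnm) a)

lemma monotone_Ioc_neg_natCast : Monotone fun n : ℕ => Ioc (-(n : ℝ)) n :=
  fun _ _ h => Ioc_subset_Ioc (neg_le_neg (Nat.cast_le.2 h)) (Nat.cast_le.2 h)

lemma iUnion_Ioc_neg_natCast : ⋃ n : ℕ, Ioc (-(n : ℝ)) n = univ := by
  refine eq_univ_of_forall fun x => mem_iUnion.2 ?_
  obtain ⟨n, hn⟩ := exists_nat_gt |x|
  exact ⟨n, by linarith [neg_abs_le x], by linarith [le_abs_self x]⟩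

def finiteSpanningSetsInIoc (μ : Measure ℝ) [IsLocallyFiniteMeasure μ] :
    μ.FiniteSpanningSetsIn {S | ∃ l u, l < u ∧ Ioc l u = S} where
  set n := Ioc (-(n + 1 : ℝ)) (n + 1)
  set_mem n := ⟨_, _, by linarith [(n.cast_nonneg : (0 : ℝ) ≤ n)], rfl⟩
  finite _ := measure_Ioc_lt_top
  spanning := eq_univ_of_univ_subset <| iUnion_Ioc_neg_natCast.symm.subset.trans <|
    iUnion_mono fun _ => Ioc_subset_Ioc (by linarith) (by linarith)

section Preimage

variable {Ω : Type*} {X : Ω → ℝ} {S : Set Ω}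

lemma preimage_Ioc_inter_eq_union {a b c : ℝ} (hab : a ≤ b) (hbc : b ≤ c) :
    X ⁻¹' Ioc a c ∩ S = (X ⁻¹' Ioc a b ∩ S) ∪ (X ⁻¹' Ioc b c ∩ S) := by
  rw [← Ioc_union_Ioc_eq_Ioc hab hbc, preimage_union, union_inter_distrib_right]

lemma disjoint_preimage_Ioc_inter {a b c : ℝ} :
    Disjoint (X ⁻¹' Ioc a b ∩ S) (X ⁻¹' Ioc b c ∩ S) :=
  ((Ioc_disjoint_Ioc_of_le le_rfl).preimage X).mono inter_subset_left inter_subset_left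

end Preimage

section Uncorrelated

variable {Ω : Type*} [MeasurableSpace Ω]

def UncorrelatedOn (P : Measure Ω) (X Y : Ω → ℝ) (S : Set Ω) : Prop :=
  P.real S * ∫ ω in S, X ω * Y ω ∂P = (∫ ω in S, X ω ∂P) * ∫ ω in S, Y ω ∂P

variable {P : Measure Ω} {X Y Z : Ω → ℝ} {S : Set Ω}

lemma uncorrelatedOn_of_measure_eq_zero (h : P S = 0) : UncorrelatedOn P X Y S := by
  simp [UncorrelatedOn, Measure.restrict_eq_zero.2 h]

lemma intervalAdditive_setIntegral_preimage_Ioc_inter (hX : Measurable X) (hS : MeasurableSet S)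
    (hZ : ∀ a b, IntegrableOn Z (X ⁻¹' Ioc a b ∩ S) P) :
    IntervalAdditive fun a b => ∫ ω in X ⁻¹' Ioc a b ∩ S, Z ω ∂P :=
  fun a b c hab hbc => by
    dsimp only
    rw [preimage_Ioc_inter_eq_union hab hbc, setIntegral_union disjoint_preimage_Ioc_inter
      ((hX measurableSet_Ioc).inter hS) (hZ a b) (hZ b c)]

variable [IsFiniteMeasure P]

lemma uncorrelatedOn_iff_cexp (h : P S ≠ 0) :
    UncorrelatedOn P X Y S ↔ cexp P S (fun ω => X ω * Y ω) = cexp P S X * cexp P S Y := by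
  have hS : P.real S ≠ 0 := ENNReal.toReal_ne_zero.2 ⟨h, measure_ne_top P S⟩
  rw [UncorrelatedOn, cexp, cexp, cexp, ← measureReal_def, div_mul_div_comm,
    div_eq_div_iff hS (mul_ne_zero hS hS)]
  constructor <;> intro H
  · linear_combination P.real S * H
  · exact mul_left_cancel₀ hS (by linear_combination H)

lemma setIntegral_preimage_inter_mul_of_map_eq_prod {α β : Type*} [MeasurableSpace α]
    [MeasurableSpace β] {X : Ω → α} {Y : Ω → β} (hX : Measurable X) (hY : Measurable Y)
    (hmap : P.map (fun ω => (X ω, Y ω)) = (P.map X).prod (P.map Y))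
    {φ : α → ℝ} {ψ : β → ℝ} (hφ : Measurable φ) (hψ : Measurable ψ)
    {A : Set α} {B : Set β} (hA : MeasurableSet A) (hB : MeasurableSet B) :
    ∫ ω in X ⁻¹' A ∩ Y ⁻¹' B, φ (X ω) * ψ (Y ω) ∂P
      = (∫ x in A, φ x ∂P.map X) * ∫ y in B, ψ y ∂P.map Y := by
  rw [← setIntegral_prod_mul, ← hmap, ← mk_preimage_prod]
  exact (setIntegral_map (hA.prod hB)
    ((hφ.comp measurable_fst).mul (hψ.comp measurable_snd)).aestronglyMeasurable
    (hX.prodMk hY).aemeasurable).symm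

lemma uncorrelatedOn_preimage_inter_of_map_eq_prod (hX : Measurable X) (hY : Measurable Y)
    (hmap : P.map (fun ω => (X ω, Y ω)) = (P.map X).prod (P.map Y))
    {A B : Set ℝ} (hA : MeasurableSet A) (hB : MeasurableSet B) :
    UncorrelatedOn P X Y (X ⁻¹' A ∩ Y ⁻¹' B) := by
  have key := fun {φ ψ : ℝ → ℝ} (hφ : Measurable φ) (hψ : Measurable ψ) =>
    setIntegral_preimage_inter_mul_of_map_eq_prod hX hY hmap hφ hψ hA hB
  have hXY := key measurable_id measurable_id
  have hX1 := key measurable_id measurable_const (ψ := fun _ => 1)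
  have h1Y := key measurable_const measurable_id (φ := fun _ => 1)
  have h11 := key measurable_const measurable_const (φ := fun _ => 1) (ψ := fun _ => 1)
  simp only [id, mul_one, one_mul, setIntegral_const, smul_eq_mul] at hXY hX1 h1Y h11
  rw [UncorrelatedOn, hXY, hX1, h1Y, h11]
  ring

lemma tendsto_measureReal_iUnion_atTop_s5 {s : ℕ → Set Ω} (hs : Monotone s) :
    Tendsto (fun n => P.real (s n)) atTop (𝓝 (P.real (⋃ n, s n))) :=
  (ENNReal.tendsto_toReal (measure_ne_top P _)).comp (tendsto_measure_iUnion_atTop hs)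

lemma tendsto_measureReal_inter_of_monotone {s t : ℕ → Set Ω} (hs : Monotone s)
    (ht : Monotone t) :
    Tendsto (fun n => P.real (s n ∩ t n)) atTop (𝓝 (P.real ((⋃ n, s n) ∩ ⋃ n, t n))) := by
  rw [← iUnion_inter_of_monotone hs ht]
  exact tendsto_measureReal_iUnion_atTop_s5 (hs.inter ht)

lemma UncorrelatedOn.iUnion {s : ℕ → Set Ω} (hs : ∀ n, MeasurableSet (s n)) (hmono : Monotone s)
    (h : ∀ᶠ n in atTop, UncorrelatedOn P X Y (s n)) (hX : IntegrableOn X (⋃ n, s n) P)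
    (hY : IntegrableOn Y (⋃ n, s n) P) (hXY : IntegrableOn (fun ω => X ω * Y ω) (⋃ n, s n) P) :
    UncorrelatedOn P X Y (⋃ n, s n) :=
  tendsto_nhds_unique_of_eventuallyEq
    ((tendsto_measureReal_iUnion_atTop_s5 hmono).mul (tendsto_setIntegral_of_monotone hs hmono hXY))
    ((tendsto_setIntegral_of_monotone hs hmono hX).mul (tendsto_setIntegral_of_monotone hs hmono hY))
    h

lemma integrableOn_preimage_Ioc_inter (hX : Measurable X) (hS : MeasurableSet S) (a b : ℝ) :
    IntegrableOn X (X ⁻¹' Ioc a b ∩ S) P :=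
  Integrable.of_mem_Icc a b hX.aemeasurable
    (ae_restrict_of_forall_mem ((hX measurableSet_Ioc).inter hS) fun _ hω =>
      Ioc_subset_Icc_self hω.1)

lemma integrableOn_mul_preimage_Ioc_inter_preimage_Ioc (hX : Measurable X) (hY : Measurable Y)
    (a b c d : ℝ) : IntegrableOn (fun ω => X ω * Y ω) (X ⁻¹' Ioc a b ∩ Y ⁻¹' Ioc c d) P := by
  have hR : MeasurableSet (X ⁻¹' Ioc a b ∩ Y ⁻¹' Ioc c d) :=
    (hX measurableSet_Ioc).inter (hY measurableSet_Ioc)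
  refine Integrable.bdd_mul (c := max |a| |b|) ?_ hX.aestronglyMeasurable
    (ae_restrict_of_forall_mem hR fun _ hω => abs_le_max_abs_abs hω.1.1.le hω.1.2)
  rw [inter_comm]
  exact integrableOn_preimage_Ioc_inter hY (hX measurableSet_Ioc) c d

lemma uncorrelatedOn_preimage_Ioc_inter_preimage_Ioc (hX : Measurable X) (hY : Measurable Y)
    (h : ∀ a b c d, a < b → c < d → UncorrelatedOn P X Y (X ⁻¹' Icc a b ∩ Y ⁻¹' Icc c d))
    (a b c d : ℝ) : UncorrelatedOn P X Y (X ⁻¹' Ioc a b ∩ Y ⁻¹' Ioc c d) := by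
  rcases le_or_gt b a with hba | hab
  · simp [Ioc_eq_empty_of_le hba, uncorrelatedOn_of_measure_eq_zero]
  rcases le_or_gt d c with hdc | hcd
  · simp [Ioc_eq_empty_of_le hdc, uncorrelatedOn_of_measure_eq_zero]
  have hXmono : Monotone fun n : ℕ => X ⁻¹' Icc (a + 1 / (n + 1)) b := fun _ _ hnm =>
    preimage_mono (monotone_Icc_add_one_div a b hnm)
  have hYmono : Monotone fun n : ℕ => Y ⁻¹' Icc (c + 1 / (n + 1)) d := fun _ _ hnm =>
    preimage_mono (monotone_Icc_add_one_div c d hnm)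
  have hunion : ⋃ n : ℕ, X ⁻¹' Icc (a + 1 / (n + 1)) b ∩ Y ⁻¹' Icc (c + 1 / (n + 1)) d
      = X ⁻¹' Ioc a b ∩ Y ⁻¹' Ioc c d := by
    rw [iUnion_inter_of_monotone hXmono hYmono, ← preimage_iUnion, ← preimage_iUnion,
      iUnion_Icc_add_one_div, iUnion_Icc_add_one_div]
  have hsmall : ∀ᶠ n : ℕ in atTop, a + 1 / (n + 1) < b ∧ c + 1 / (n + 1) < d := by
    obtain ⟨N, hN⟩ := exists_nat_one_div_lt (lt_min (sub_pos.2 hab) (sub_pos.2 hcd))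
    filter_upwards [eventually_ge_atTop N] with n hn
    have := (Nat.one_div_le_one_div (α := ℝ) hn).trans_lt hN
    constructor <;> linarith [min_le_left (b - a) (d - c), min_le_right (b - a) (d - c)]
  rw [← hunion]
  refine UncorrelatedOn.iUnion (fun n => (hX measurableSet_Icc).inter (hY measurableSet_Icc))
    (hXmono.inter hYmono) (hsmall.mono fun n hn => h _ _ _ _ hn.1 hn.2) ?_ ?_ ?_ <;> rw [hunion]
  · exact integrableOn_preimage_Ioc_inter hX (hY measurableSet_Ioc) a b
  · rw [inter_comm]; exact integrableOn_preimage_Ioc_inter hY (hX measurableSet_Ioc) c d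
  · exact integrableOn_mul_preimage_Ioc_inter_preimage_Ioc hX hY a b c d

lemma intervalAdditive_measureReal_preimage_Ioc_inter (hX : Measurable X)
    (hS : MeasurableSet S) : IntervalAdditive fun a b => P.real (X ⁻¹' Ioc a b ∩ S) :=
  fun _ _ _ hab hbc => by
    dsimp only
    rw [preimage_Ioc_inter_eq_union hab hbc,
      measureReal_union disjoint_preimage_Ioc_inter ((hX measurableSet_Ioc).inter hS)]

lemma setIntegral_preimage_Ioc_inter_le (hX : Measurable X) (hS : MeasurableSet S) (a b : ℝ) :
    ∫ ω in X ⁻¹' Ioc a b ∩ S, X ω ∂P ≤ b * P.real (X ⁻¹' Ioc a b ∩ S) := by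
  have := setIntegral_mono_on (integrableOn_preimage_Ioc_inter hX hS a b)
    (integrableOn_const (measure_ne_top P _)) ((hX measurableSet_Ioc).inter hS)
    fun ω hω => hω.1.2
  rwa [setIntegral_const, smul_eq_mul, mul_comm] at this

lemma lt_setIntegral_preimage_Ioc_inter (hX : Measurable X) (hS : MeasurableSet S) (a b : ℝ)
    (hpos : 0 < P.real (X ⁻¹' Ioc a b ∩ S)) :
    a * P.real (X ⁻¹' Ioc a b ∩ S) < ∫ ω in X ⁻¹' Ioc a b ∩ S, X ω ∂P := by
  set T := X ⁻¹' Ioc a b ∩ S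
  have hT : MeasurableSet T := (hX measurableSet_Ioc).inter hS
  have hXT := integrableOn_preimage_Ioc_inter (P := P) hX hS a b
  have hsub : 0 < ∫ ω in T, (X ω - a) ∂P := by
    refine (setIntegral_pos_iff_support_of_nonneg_ae
      (ae_restrict_of_forall_mem hT fun ω hω => sub_nonneg.2 hω.1.1.le)
      (hXT.sub (integrableOn_const (measure_ne_top P _)))).2 ?_
    have hsupp : T ⊆ Function.support fun ω => X ω - a := fun ω hω => (sub_pos.2 hω.1.1).ne'
    rw [inter_eq_right.2 hsupp]
    exact (ENNReal.toReal_pos_iff.1 hpos).1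
  rw [integral_sub hXT (integrableOn_const (measure_ne_top P _)), setIntegral_const,
    smul_eq_mul] at hsub
  linarith

lemma integral_ratio_eq_of_uncorrelatedOn (hX : Measurable X) (hS : MeasurableSet S)
    (hZ : ∀ a b, IntegrableOn Z (X ⁻¹' Ioc a b ∩ S) P)
    (hXZ : ∀ a b, IntegrableOn (fun ω => X ω * Z ω) (X ⁻¹' Ioc a b ∩ S) P)
    (h : ∀ a b, UncorrelatedOn P X Z (X ⁻¹' Ioc a b ∩ S)) {a b c d : ℝ} (hab : a ≤ b)
    (hcd : c ≤ d) :
    (∫ ω in X ⁻¹' Ioc a b ∩ S, Z ω ∂P) * P.real (X ⁻¹' Ioc c d ∩ S)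
      = P.real (X ⁻¹' Ioc a b ∩ S) * ∫ ω in X ⁻¹' Ioc c d ∩ S, Z ω ∂P :=
  IntervalAdditive.ratio_eq_of_mul_eq_mul (intervalAdditive_measureReal_preimage_Ioc_inter hX hS)
    (intervalAdditive_setIntegral_preimage_Ioc_inter hX hS
      (integrableOn_preimage_Ioc_inter hX hS))
    (intervalAdditive_setIntegral_preimage_Ioc_inter hX hS hZ)
    (intervalAdditive_setIntegral_preimage_Ioc_inter hX hS hXZ)
    (fun _ _ _ => measureReal_nonneg)
    (fun _ _ _ h0 => setIntegral_measure_zero _ ((measureReal_eq_zero_iff).1 h0))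
    (fun a b _ => setIntegral_preimage_Ioc_inter_le hX hS a b)
    (fun a b _ => lt_setIntegral_preimage_Ioc_inter hX hS a b)
    (fun a b _ => h a b) hab hcd

lemma measureReal_mul_comm_of_uncorrelatedOn (hX : Measurable X) (hY : Measurable Y)
    (h : ∀ a b c d, UncorrelatedOn P X Y (X ⁻¹' Ioc a b ∩ Y ⁻¹' Ioc c d))
    {a' a b b' r s r' s' : ℝ} (h₁ : a' ≤ a) (h₂ : a ≤ b) (h₃ : b ≤ b') (hrs : r ≤ s)
    (hrs' : r' ≤ s') :
    P.real (X ⁻¹' Ioc a b ∩ Y ⁻¹' Ioc r s) * P.real (X ⁻¹' Ioc a' b' ∩ Y ⁻¹' Ioc r' s')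
      = P.real (X ⁻¹' Ioc a' b' ∩ Y ⁻¹' Ioc r s) * P.real (X ⁻¹' Ioc a b ∩ Y ⁻¹' Ioc r' s') := by
  have hXab : MeasurableSet (X ⁻¹' Ioc a b) := hX measurableSet_Ioc
  have hXab' : MeasurableSet (X ⁻¹' Ioc a' b') := hX measurableSet_Ioc
  have hY_int : ∀ {T : Set Ω}, MeasurableSet T → ∀ u v, IntegrableOn Y (Y ⁻¹' Ioc u v ∩ T) P :=
    fun hT => integrableOn_preimage_Ioc_inter hY hT
  have hmean : ∀ u v, u ≤ v →
      P.real (Y ⁻¹' Ioc u v ∩ X ⁻¹' Ioc a' b') * ∫ ω in Y ⁻¹' Ioc u v ∩ X ⁻¹' Ioc a b, Y ω ∂P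
        = (∫ ω in Y ⁻¹' Ioc u v ∩ X ⁻¹' Ioc a' b', Y ω ∂P)
          * P.real (Y ⁻¹' Ioc u v ∩ X ⁻¹' Ioc a b) := fun u v _ => by
    have := integral_ratio_eq_of_uncorrelatedOn hX (hY measurableSet_Ioc)
      (fun _ _ => inter_comm (Y ⁻¹' Ioc u v) _ ▸ hY_int (hX measurableSet_Ioc) u v)
      (fun p q => integrableOn_mul_preimage_Ioc_inter_preimage_Ioc hX hY p q u v)
      (fun p q => h p q u v) h₂ (h₁.trans (h₂.trans h₃))
    simp only [inter_comm (X ⁻¹' _) (Y ⁻¹' Ioc u v)] at this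
    linear_combination this
  -- `hmean`, the first application of `ratio_eq_of_mul_eq_mul`, is the hypothesis `m h = f g`
  -- of the second one, in the `Y`-interval.
  have key := IntervalAdditive.ratio_eq_of_mul_eq_mul
    (intervalAdditive_measureReal_preimage_Ioc_inter hY hXab')
    (intervalAdditive_setIntegral_preimage_Ioc_inter hY hXab' (hY_int hXab'))
    (intervalAdditive_measureReal_preimage_Ioc_inter hY hXab)
    (intervalAdditive_setIntegral_preimage_Ioc_inter hY hXab (hY_int hXab))
    (fun _ _ _ => measureReal_nonneg)
    (fun _ _ _ h0 => le_antisymm (h0 ▸ measureReal_mono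
      (inter_subset_inter_right _ (preimage_mono (Ioc_subset_Ioc h₁ h₃)))) measureReal_nonneg)
    (fun u v _ => setIntegral_preimage_Ioc_inter_le hY hXab' u v)
    (fun u v _ => lt_setIntegral_preimage_Ioc_inter hY hXab' u v)
    hmean hrs hrs'
  simp only [inter_comm (Y ⁻¹' _) (X ⁻¹' _)] at key
  linear_combination key

lemma measure_preimage_Ioc_inter_preimage_Ioc [IsProbabilityMeasure P] (hX : Measurable X)
    (hY : Measurable Y) (h : ∀ a b c d, UncorrelatedOn P X Y (X ⁻¹' Ioc a b ∩ Y ⁻¹' Ioc c d))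
    {a b c d : ℝ} (hab : a ≤ b) (hcd : c ≤ d) :
    P (X ⁻¹' Ioc a b ∩ Y ⁻¹' Ioc c d) = P (X ⁻¹' Ioc a b) * P (Y ⁻¹' Ioc c d) := by
  set I : ℕ → Set ℝ := fun n => Ioc (-(n : ℝ)) n
  have hXI : Monotone fun n => X ⁻¹' I n := fun _ _ hnm =>
    preimage_mono (monotone_Ioc_neg_natCast hnm)
  have hYI : Monotone fun n => Y ⁻¹' I n := fun _ _ hnm =>
    preimage_mono (monotone_Ioc_neg_natCast hnm)
  have hXU : ⋃ n, X ⁻¹' I n = univ := by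
    rw [← preimage_iUnion, iUnion_Ioc_neg_natCast, preimage_univ]
  have hYU : ⋃ n, Y ⁻¹' I n = univ := by
    rw [← preimage_iUnion, iUnion_Ioc_neg_natCast, preimage_univ]
  have hlim_univ : Tendsto (fun n => P.real (X ⁻¹' I n ∩ Y ⁻¹' I n)) atTop (𝓝 1) := by
    simpa [hXU, hYU] using tendsto_measureReal_inter_of_monotone (P := P) hXI hYI
  have hlim_Y : Tendsto (fun n => P.real (X ⁻¹' I n ∩ Y ⁻¹' Ioc c d)) atTop
      (𝓝 (P.real (Y ⁻¹' Ioc c d))) := by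
    simpa [hXU, iUnion_const] using tendsto_measureReal_inter_of_monotone (P := P) hXI
      (monotone_const (c := Y ⁻¹' Ioc c d))
  have hlim_X : Tendsto (fun n => P.real (X ⁻¹' Ioc a b ∩ Y ⁻¹' I n)) atTop
      (𝓝 (P.real (X ⁻¹' Ioc a b))) := by
    simpa [hYU, iUnion_const] using tendsto_measureReal_inter_of_monotone (P := P)
      (monotone_const (c := X ⁻¹' Ioc a b)) hYI
  have heq : ∀ᶠ n : ℕ in atTop,
      P.real (X ⁻¹' Ioc a b ∩ Y ⁻¹' Ioc c d) * P.real (X ⁻¹' I n ∩ Y ⁻¹' I n)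
        = P.real (X ⁻¹' I n ∩ Y ⁻¹' Ioc c d) * P.real (X ⁻¹' Ioc a b ∩ Y ⁻¹' I n) := by
    filter_upwards [tendsto_natCast_atTop_atTop.eventually_ge_atTop (-a),
      tendsto_natCast_atTop_atTop.eventually_ge_atTop b] with n ha hb
    exact measureReal_mul_comm_of_uncorrelatedOn hX hY h (neg_le.1 ha) hab hb hcd
      (by linarith)
  have hreal := tendsto_nhds_unique_of_eventuallyEq
    (tendsto_const_nhds.mul hlim_univ) (hlim_Y.mul hlim_X) heq
  rw [mul_one, mul_comm, measureReal_def, measureReal_def, measureReal_def,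
    ← ENNReal.toReal_mul] at hreal
  exact (ENNReal.toReal_eq_toReal_iff' (measure_ne_top _ _) (by finiteness)).1 hreal

lemma map_prod_eq_of_measure_preimage_Ioc (hX : Measurable X) (hY : Measurable Y)
    (h : ∀ a b c d, a < b → c < d →
      P (X ⁻¹' Ioc a b ∩ Y ⁻¹' Ioc c d) = P (X ⁻¹' Ioc a b) * P (Y ⁻¹' Ioc c d)) :
    P.map (fun ω => (X ω, Y ω)) = (P.map X).prod (P.map Y) := by
  have hgen : MeasurableSpace.generateFrom {S : Set ℝ | ∃ l u, l < u ∧ Ioc l u = S}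
      = Real.measurableSpace :=
    (borel_eq_generateFrom_Ioc ℝ).symm.trans BorelSpace.measurable_eq.symm
  refine (Measure.prod_eq_generateFrom hgen hgen (isPiSystem_Ioc id id) (isPiSystem_Ioc id id)
    (finiteSpanningSetsInIoc _) (finiteSpanningSetsInIoc _) ?_).symm
  rintro _ ⟨a, b, hab, rfl⟩ _ ⟨c, d, hcd, rfl⟩
  rw [Measure.map_apply (hX.prodMk hY) (measurableSet_Ioc.prod measurableSet_Ioc),
    mk_preimage_prod, Measure.map_apply hX measurableSet_Ioc,
    Measure.map_apply hY measurableSet_Ioc]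
  exact h a b c d hab hcd

end Uncorrelated

theorem stmt_5 {Ω : Type*} [MeasurableSpace Ω] (P : Measure Ω) [IsProbabilityMeasure P]
    (X Y : Ω → ℝ) (hX : Measurable X) (hY : Measurable Y) :
    Measure.map (fun ω => (X ω, Y ω)) P = (Measure.map X P).prod (Measure.map Y P) ↔
    ∀ a b c d : ℝ, a < b → c < d →
      0 < P {ω | X ω ∈ Icc a b ∧ Y ω ∈ Icc c d} →
      cexp P {ω | X ω ∈ Icc a b ∧ Y ω ∈ Icc c d} (fun ω => X ω * Y ω)
        = cexp P {ω | X ω ∈ Icc a b ∧ Y ω ∈ Icc c d} X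
          * cexp P {ω | X ω ∈ Icc a b ∧ Y ω ∈ Icc c d} Y := by
  constructor
  · intro hmap a b c d _ _ hpos
    exact (uncorrelatedOn_iff_cexp hpos.ne').1 (uncorrelatedOn_preimage_inter_of_map_eq_prod
      hX hY hmap measurableSet_Icc measurableSet_Icc)
  · intro H
    have hIcc : ∀ a b c d, a < b → c < d →
        UncorrelatedOn P X Y (X ⁻¹' Icc a b ∩ Y ⁻¹' Icc c d) := fun a b c d hab hcd => by
      rcases eq_or_ne (P (X ⁻¹' Icc a b ∩ Y ⁻¹' Icc c d)) 0 with h0 | h0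
      · exact uncorrelatedOn_of_measure_eq_zero h0
      · exact (uncorrelatedOn_iff_cexp h0).2 (H a b c d hab hcd (pos_iff_ne_zero.2 h0))
    exact map_prod_eq_of_measure_preimage_Ioc hX hY fun a b c d hab hcd =>
      measure_preimage_Ioc_inter_preimage_Ioc hX hY
        (uncorrelatedOn_preimage_Ioc_inter_preimage_Ioc hX hY hIcc) hab.le hcd.le
end

section
/- Let X₁, …, Xₙ be real-valued random variables. Suppose that for every choice of bounded closed intervals A₁, …, Aₙ (each with nonempty interior) such that the event U = {X₁ ∈ A₁, …, Xₙ ∈ Aₙ} has ℙ(U) > 0, and for every pair of indices i ≠ j and all Borel sets A, B ⊆ ℝ, one has ℙ(Xᵢ ∈ A, Xⱼ ∈ B | U) = ℙ(Xᵢ ∈ A | U) · ℙ(Xⱼ ∈ B | U). Then X₁, …, Xₙ are mutually independent. -/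
/-!
Write `E S` for the event that `X k ∈ [a k, b k]` for all `k ∈ S`. Letting the intervals of the
coordinates outside `S` grow to all of `ℝ`, continuity of measure carries the conditional pairwise
independence from full boxes over to `E S`. Given `E S`, the events `X i ∈ [a i, b i]` and
`X j ∈ [a j, b j]` (`i, j ∉ S`) are then conditionally independent, and induction on `S` shows that
the probability of every nondegenerate box factors over the coordinates. Degenerate closed boxes
are decreasing limits of nondegenerate ones, and closed boxes form a generating π-system, so the
joint law is the product of the marginals.
-/

open MeasureTheory Set Filter Topology ENNReal

section

variable {Ω ι : Type*} [MeasurableSpace Ω] {P : Measure Ω}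

/-- `ℙ(A ∩ B | U) = ℙ(A | U) ℙ(B | U)` with the denominators cleared, so that it holds trivially
when `P U = 0`. -/
def IndepGiven (P : Measure Ω) (U A B : Set Ω) : Prop :=
  P (A ∩ B ∩ U) * P U = P (A ∩ U) * P (B ∩ U)

namespace IndepGiven

variable {U A B : Set Ω}

lemma of_div [IsFiniteMeasure P]
    (h : 0 < P U → P (A ∩ B ∩ U) / P U = P (A ∩ U) / P U * (P (B ∩ U) / P U)) :
    IndepGiven P U A B := by
  rcases eq_or_ne (P U) 0 with hU | hU
  · simp [IndepGiven, hU, measure_mono_null inter_subset_right hU]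
  · have hU' : P U ≠ ∞ := measure_ne_top P U
    have cancel (x : ℝ≥0∞) : x / P U * P U = x := ENNReal.div_mul_cancel hU hU'
    calc P (A ∩ B ∩ U) * P U = P (A ∩ B ∩ U) / P U * P U * P U := by rw [cancel]
      _ = P (A ∩ U) / P U * P U * (P (B ∩ U) / P U * P U) := by
        rw [h (pos_iff_ne_zero.mpr hU)]; ring
      _ = P (A ∩ U) * P (B ∩ U) := by rw [cancel, cancel]

lemma iUnion_of_monotone [IsFiniteMeasure P] {U : ℕ → Set Ω} (hU : Monotone U)
    (h : ∀ m, IndepGiven P (U m) A B) : IndepGiven P (⋃ m, U m) A B := by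
  have lim : ∀ C : Set Ω, Tendsto (fun m => P (C ∩ U m)) atTop (𝓝 (P (C ∩ ⋃ m, U m))) := by
    intro C
    rw [inter_iUnion]
    exact tendsto_measure_iUnion_atTop fun m m' hm => inter_subset_inter_right C (hU hm)
  have limU : Tendsto (fun m => P (U m)) atTop (𝓝 (P (⋃ m, U m))) := by
    simpa only [univ_inter] using lim univ
  have fin : ∀ C, P C ≠ ∞ := measure_ne_top P
  exact tendsto_nhds_unique (ENNReal.Tendsto.mul (lim _) (.inr (fin _)) limU (.inr (fin _)))
    ((ENNReal.Tendsto.mul (lim A) (.inr (fin _)) (lim B) (.inr (fin _))).congr fun m => (h m).symm)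

end IndepGiven

section Events

variable [IsProbabilityMeasure P] {F : ι → Set Ω}

lemma measure_inter_biInter_eq_mul_of_indepGiven
    (h : ∀ (S : Finset ι) i j, i ≠ j → i ∉ S → j ∉ S → IndepGiven P (⋂ k ∈ S, F k) (F i) (F j))
    (S : Finset ι) : ∀ i ∉ S, P (F i ∩ ⋂ k ∈ S, F k) = P (F i) * P (⋂ k ∈ S, F k) := by
  classical
  induction S using Finset.induction_on with
  | empty => simp
  | insert j S hjS ih =>
    intro i hi
    obtain ⟨hij, hiS⟩ : i ≠ j ∧ i ∉ S := by simpa [not_or] using hi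
    rw [Finset.set_biInter_insert]
    rcases eq_or_ne (P (⋂ k ∈ S, F k)) 0 with h0 | h0
    · simp [measure_mono_null (inter_subset_right.trans inter_subset_right) h0,
        measure_mono_null inter_subset_right h0]
    have key : P (F i ∩ F j ∩ ⋂ k ∈ S, F k) * P (⋂ k ∈ S, F k)
        = P (F i) * P (F j ∩ ⋂ k ∈ S, F k) * P (⋂ k ∈ S, F k) := by
      rw [h S i j hij hiS hjS, ih i hiS]; ring
    rw [← inter_assoc]
    exact (ENNReal.mul_left_inj h0 (measure_ne_top _ _)).mp key

lemma measure_biInter_eq_prod_of_indepGiven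
    (h : ∀ (S : Finset ι) i j, i ≠ j → i ∉ S → j ∉ S → IndepGiven P (⋂ k ∈ S, F k) (F i) (F j))
    (S : Finset ι) : P (⋂ k ∈ S, F k) = ∏ k ∈ S, P (F k) := by
  classical
  induction S using Finset.induction_on with
  | empty => simp
  | insert j S hjS ih =>
    rw [Finset.set_biInter_insert, measure_inter_biInter_eq_mul_of_indepGiven h S j hjS,
      Finset.prod_insert hjS, ih]

end Events

lemma iUnion_Icc_sub_natCast_add_natCast (a b : ℝ) : ⋃ m : ℕ, Icc (a - m) (b + m) = univ := by
  refine eq_univ_of_forall fun x => mem_iUnion.mpr ?_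
  obtain ⟨m, hm⟩ := exists_nat_ge (max (a - x) (x - b))
  exact ⟨m, by constructor <;> linarith [le_max_left (a - x) (x - b), le_max_right (a - x) (x - b)]⟩

lemma indepGiven_biInter_preimage_Icc [Finite ι] [IsFiniteMeasure P] {X : ι → Ω → ℝ} {A B : Set Ω}
    (h : ∀ a b : ι → ℝ, (∀ k, a k < b k) → IndepGiven P (⋂ k, X k ⁻¹' Icc (a k) (b k)) A B)
    (S : Finset ι) {a b : ι → ℝ} (hab : ∀ k, a k < b k) :
    IndepGiven P (⋂ k ∈ S, X k ⁻¹' Icc (a k) (b k)) A B := by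
  classical
  let a' (m : ℕ) (k : ι) : ℝ := if k ∈ S then a k else a k - m
  let b' (m : ℕ) (k : ι) : ℝ := if k ∈ S then b k else b k + m
  have hmono (k : ι) : Monotone fun m => X k ⁻¹' Icc (a' m k) (b' m k) := fun m m' hm => by
    by_cases hk : k ∈ S
    · simp [a', b', hk]
    · exact preimage_mono <| Icc_subset_Icc (by simp only [a', if_neg hk]; gcongr)
        (by simp only [b', if_neg hk]; gcongr)
  have hunion : ⋃ m, ⋂ k, X k ⁻¹' Icc (a' m k) (b' m k) = ⋂ k ∈ S, X k ⁻¹' Icc (a k) (b k) := by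
    rw [iUnion_iInter_of_monotone hmono]
    ext ω
    simp only [mem_iInter, ← preimage_iUnion]
    refine forall_congr' fun k => ?_
    by_cases hk : k ∈ S
    · simp [a', b', hk]
    · simp [a', b', hk, iUnion_Icc_sub_natCast_add_natCast]
  rw [← hunion]
  refine IndepGiven.iUnion_of_monotone (fun m m' hm => iInter_mono fun k => hmono k hm)
    fun m => h _ _ fun k => ?_
  simp only [a', b']
  split_ifs
  · exact hab k
  · linarith [hab k, (Nat.cast_nonneg m : (0:ℝ) ≤ m)]

lemma measure_iInter_preimage_Icc_eq_prod [Fintype ι] [IsProbabilityMeasure P] {X : ι → Ω → ℝ}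
    (h : ∀ a b : ι → ℝ, (∀ k, a k < b k) → ∀ i j, i ≠ j → ∀ A B : Set ℝ,
      MeasurableSet A → MeasurableSet B →
      IndepGiven P (⋂ k, X k ⁻¹' Icc (a k) (b k)) (X i ⁻¹' A) (X j ⁻¹' B))
    {a b : ι → ℝ} (hab : ∀ k, a k < b k) :
    P (⋂ k, X k ⁻¹' Icc (a k) (b k)) = ∏ k, P (X k ⁻¹' Icc (a k) (b k)) := by
  simpa using measure_biInter_eq_prod_of_indepGiven
    (fun S i j hij _ _ => indepGiven_biInter_preimage_Icc
      (fun a' b' hab' => h a' b' hab' i j hij _ _ measurableSet_Icc measurableSet_Icc) S hab)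
    Finset.univ

lemma iInter_Icc_sub_add_one_div (a b : ℝ) :
    ⋂ m : ℕ, Icc (a - 1 / (m + 1)) (b + 1 / (m + 1)) = Icc a b := by
  ext x
  simp only [mem_iInter, mem_Icc]
  refine ⟨fun hx => ⟨?_, ?_⟩, fun hx m => ?_⟩
  · exact le_of_forall_pos_le_add fun ε hε => by
      obtain ⟨m, hm⟩ := exists_nat_one_div_lt hε
      linarith [(hx m).1]
  · exact le_of_forall_pos_le_add fun ε hε => by
      obtain ⟨m, hm⟩ := exists_nat_one_div_lt hε
      linarith [(hx m).2]
  · have : (0 : ℝ) < 1 / (m + 1) := by positivity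
    constructor <;> linarith [hx.1, hx.2]

lemma measure_pi_Icc_eq_of_forall_lt [Finite ι] {μ ν : Measure (ι → ℝ)}
    [IsFiniteMeasure μ] [IsFiniteMeasure ν]
    (h : ∀ a b : ι → ℝ, (∀ k, a k < b k) →
      μ (pi univ fun k => Icc (a k) (b k)) = ν (pi univ fun k => Icc (a k) (b k)))
    {a b : ι → ℝ} (hab : ∀ k, a k ≤ b k) :
    μ (pi univ fun k => Icc (a k) (b k)) = ν (pi univ fun k => Icc (a k) (b k)) := by
  let box (m : ℕ) : Set (ι → ℝ) := pi univ fun k => Icc (a k - 1 / (m + 1)) (b k + 1 / (m + 1))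
  have hanti : Antitone box := fun m m' hm =>
    pi_mono fun k _ => Icc_subset_Icc (by gcongr) (by gcongr)
  have hinter : ⋂ m, box m = pi univ fun k => Icc (a k) (b k) := by
    ext x
    simp only [box, mem_iInter, mem_univ_pi, ← iInter_Icc_sub_add_one_div (a _) (b _)]
    exact forall_comm
  have lim (ρ : Measure (ι → ℝ)) [IsFiniteMeasure ρ] :
      Tendsto (fun m => ρ (box m)) atTop (𝓝 (ρ (pi univ fun k => Icc (a k) (b k)))) := by
    rw [← hinter]
    exact tendsto_measure_iInter_atTop
      (fun m => (MeasurableSet.univ_pi fun k => measurableSet_Icc).nullMeasurableSet) hanti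
      ⟨0, measure_ne_top _ _⟩
  refine tendsto_nhds_unique (lim μ) ((lim ν).congr fun m => (h _ _ fun k => ?_).symm)
  have : (0 : ℝ) < 1 / (m + 1) := by positivity
  linarith [hab k]

theorem map_eq_pi_of_measure_iInter_preimage_Icc [Fintype ι] [IsFiniteMeasure P]
    {X : ι → Ω → ℝ} (hX : ∀ k, Measurable (X k))
    (h : ∀ a b : ι → ℝ, (∀ k, a k < b k) →
      P (⋂ k, X k ⁻¹' Icc (a k) (b k)) = ∏ k, P (X k ⁻¹' Icc (a k) (b k))) :
    P.map (fun ω k => X k ω) = Measure.pi fun k => P.map (X k) := by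
  have hmeas : Measurable fun ω k => X k ω := measurable_pi_lambda _ hX
  have hjoint (a b : ι → ℝ) :
      P.map (fun ω k => X k ω) (pi univ fun k => Icc (a k) (b k))
        = P (⋂ k, X k ⁻¹' Icc (a k) (b k)) := by
    rw [Measure.map_apply hmeas (.univ_pi fun _ => measurableSet_Icc)]
    congr 1; ext; simp [Pi.le_def, forall_and]
  have hmarg (a b : ι → ℝ) (k : ι) :
      P.map (X k) (Icc (a k) (b k)) = P (X k ⁻¹' Icc (a k) (b k)) :=
    Measure.map_apply (hX k) measurableSet_Icc
  refine (Measure.pi_eq_generateFrom (fun _ => (borel_eq_generateFrom_Icc ℝ).symm)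
    (fun _ => isPiSystem_Icc id id) (fun _ => ?_) ?_).symm
  · exact ⟨fun m => Icc (0 - m) (0 + m), fun m => ⟨_, _, by simp, rfl⟩,
      fun m => measure_lt_top _ _, iUnion_Icc_sub_natCast_add_natCast 0 0⟩
  · intro s hs
    choose a b hab hs using hs
    obtain rfl : s = fun k => Icc (a k) (b k) := funext fun k => (hs k).symm
    rw [measure_pi_Icc_eq_of_forall_lt (ν := Measure.pi fun k => P.map (X k)) _ hab,
      Measure.pi_pi]
    intro a b hab
    simp only [hjoint, Measure.pi_pi, hmarg, h a b hab]

end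

theorem stmt_9 {Ω : Type*} [MeasurableSpace Ω] (P : Measure Ω) [IsProbabilityMeasure P]
    {n : ℕ} (X : Fin n → Ω → ℝ) (hX : ∀ k, Measurable (X k))
    (h : ∀ a b : Fin n → ℝ, (∀ k, a k < b k) →
      0 < P {ω | ∀ k, X k ω ∈ Icc (a k) (b k)} →
      ∀ i j, i ≠ j → ∀ A B : Set ℝ, MeasurableSet A → MeasurableSet B →
        P ({ω | X i ω ∈ A ∧ X j ω ∈ B} ∩ {ω | ∀ k, X k ω ∈ Icc (a k) (b k)})
            / P {ω | ∀ k, X k ω ∈ Icc (a k) (b k)}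
          = (P ({ω | X i ω ∈ A} ∩ {ω | ∀ k, X k ω ∈ Icc (a k) (b k)})
              / P {ω | ∀ k, X k ω ∈ Icc (a k) (b k)})
            * (P ({ω | X j ω ∈ B} ∩ {ω | ∀ k, X k ω ∈ Icc (a k) (b k)})
              / P {ω | ∀ k, X k ω ∈ Icc (a k) (b k)})) :
    Measure.map (fun ω k => X k ω) P = Measure.pi (fun k => Measure.map (X k) P) := by
  have hbox_eq (a b : Fin n → ℝ) :
      {ω | ∀ k, X k ω ∈ Icc (a k) (b k)} = ⋂ k, X k ⁻¹' Icc (a k) (b k) := by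
    ext; simp
  simp only [hbox_eq] at h
  have hindep : ∀ a b : Fin n → ℝ, (∀ k, a k < b k) → ∀ i j, i ≠ j → ∀ A B : Set ℝ,
      MeasurableSet A → MeasurableSet B →
      IndepGiven P (⋂ k, X k ⁻¹' Icc (a k) (b k)) (X i ⁻¹' A) (X j ⁻¹' B) :=
    fun a b hab i j hij A B hA hB => IndepGiven.of_div fun hpos => h a b hab hpos i j hij A B hA hB
  exact map_eq_pi_of_measure_iInter_preimage_Icc hX fun a b hab =>
    measure_iInter_preimage_Icc_eq_prod hindep hab
end
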